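/- arXiv:2603.21375 — 8 statements merged into one kernel-verified Lean document; each statement's English description precedes it below -/
import Mathlib

section
/- Regret decomposition for the penalty surrogate: for every index 1 ≤ s ≤ T and every comparator u ∈ X satisfying ĝ_t(u) ≤ 0 for all t ∈ {s,…,T}, one has Σ_{t=s}^T (f̂_t(x_t) − f̂_t(u)) + Φ(V̂_T) − Φ(V̂_{s−1}) ≤ Σ_{t=s}^T (L̂_t(x_t) − L̂_t(u)). -/
/-!
By feasibility of `u` on `{s,…,T}` the penalty term of `L̂_t(u)` vanishes, so the right-hand side
exceeds the `f̂`-regret by exactly `Σ_{t=s}^T Φ′(V̂_t) ĝ_t⁺(x_t)`. Each summand dominates the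
increment `Φ(V̂_t) − Φ(V̂_{t−1})`: this is the tangent-line inequality for the convex `Φ` at `V̂_t`,
since `V̂_t − V̂_{t−1} = ĝ_t⁺(x_t)`. The increments telescope to `Φ(V̂_T) − Φ(V̂_{s−1})`.
-/

open Finset

theorem Finset.sum_Icc_sub_pred {M : Type*} [AddCommGroup M] (a : ℕ → M) {s T : ℕ}
    (hs : 1 ≤ s) (hsT : s ≤ T + 1) :
    ∑ t ∈ Icc s T, (a t - a (t - 1)) = a T - a (s - 1) := by
  obtain ⟨m, rfl⟩ : ∃ m, s = m + 1 := ⟨s - 1, by omega⟩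
  rw [← Ico_add_one_right_eq_Icc, ← sum_Ico_add' (fun t => a t - a (t - 1)) m T 1]
  simpa using sum_Ico_sub a (by omega : m ≤ T)

theorem ConvexOn.sub_le_mul_sub_of_hasDerivAt {S : Set ℝ} {φ : ℝ → ℝ} {φ' a b : ℝ}
    (hφ : ConvexOn ℝ S φ) (ha : a ∈ S) (hb : b ∈ S) (hab : a ≤ b) (hφ' : HasDerivAt φ φ' b) :
    φ b - φ a ≤ φ' * (b - a) := by
  rcases hab.eq_or_lt with rfl | hlt
  · simp
  · have hslope := hφ.slope_le_of_hasDerivAt ha hb hlt hφ'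
    rwa [slope_def_field, div_le_iff₀ (sub_pos.mpr hlt)] at hslope

theorem ConvexOn.apply_sum_Icc_sub_le_deriv_mul {Φ Φ' : ℝ → ℝ}
    (hΦ : ConvexOn ℝ (Set.Ici 0) Φ) (hΦ' : ∀ v ∈ Set.Ici (0 : ℝ), HasDerivAt Φ (Φ' v) v)
    {w : ℕ → ℝ} (hw : ∀ t, 0 ≤ w t) {t : ℕ} (ht : 1 ≤ t) :
    Φ (∑ τ ∈ Icc 1 t, w τ) - Φ (∑ τ ∈ Icc 1 (t - 1), w τ) ≤ Φ' (∑ τ ∈ Icc 1 t, w τ) * w t := by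
  obtain ⟨n, rfl⟩ : ∃ n, t = n + 1 := ⟨t - 1, by omega⟩
  have hprev : 0 ≤ ∑ τ ∈ Icc 1 n, w τ := sum_nonneg fun τ _ => hw τ
  have hcur : 0 ≤ ∑ τ ∈ Icc 1 (n + 1), w τ := sum_nonneg fun τ _ => hw τ
  have hincr : ∑ τ ∈ Icc 1 (n + 1), w τ - ∑ τ ∈ Icc 1 n, w τ = w (n + 1) := by
    rw [sum_Icc_succ_top (by omega) w, add_sub_cancel_left]
  have := hΦ.sub_le_mul_sub_of_hasDerivAt (Set.mem_Ici.mpr hprev) (Set.mem_Ici.mpr hcur)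
    (by linarith [hw (n + 1)]) (hΦ' _ hcur)
  rw [Nat.add_sub_cancel]
  rwa [hincr] at this

theorem penalty_surrogate_regret_decomposition_general
    (d T : ℕ)
    (f g : ℕ → EuclideanSpace ℝ (Fin d) → ℝ)
    (Φ Φ' : ℝ → ℝ)
    (hΦconv : ConvexOn ℝ (Set.Ici 0) Φ)
    (hΦderiv : ∀ v ∈ Set.Ici (0:ℝ), HasDerivAt Φ (Φ' v) v)
    -- arbitrary decisions
    (x : ℕ → EuclideanSpace ℝ (Fin d))
    -- cumulative violation and surrogate losses
    (V : ℕ → ℝ)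
    (hV : ∀ t, V t = ∑ τ ∈ Finset.Icc 1 t, max (g τ (x τ)) 0)
    (L : ℕ → EuclideanSpace ℝ (Fin d) → ℝ)
    (hL : ∀ t y, L t y = f t y + Φ' (V t) * max (g t y) 0)
    -- index s and comparator
    (s : ℕ) (hs1 : 1 ≤ s) (hsT : s ≤ T)
    (u : EuclideanSpace ℝ (Fin d))
    (hufeas : ∀ t ∈ Finset.Icc s T, g t u ≤ 0) :
    ∑ t ∈ Finset.Icc s T, (f t (x t) - f t u) + Φ (V T) - Φ (V (s - 1))
      ≤ ∑ t ∈ Finset.Icc s T, (L t (x t) - L t u) := by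
  have hstep : ∀ t ∈ Icc s T,
      f t (x t) - f t u + (Φ (V t) - Φ (V (t - 1))) ≤ L t (x t) - L t u := by
    intro t ht
    have hincr := hΦconv.apply_sum_Icc_sub_le_deriv_mul hΦderiv
      (fun τ => le_max_right (g τ (x τ)) 0) (hs1.trans (mem_Icc.mp ht).1)
    rw [hL, hL, max_eq_right (hufeas t ht), hV, hV]
    linarith
  calc ∑ t ∈ Icc s T, (f t (x t) - f t u) + Φ (V T) - Φ (V (s - 1))
      = ∑ t ∈ Icc s T, (f t (x t) - f t u + (Φ (V t) - Φ (V (t - 1)))) := by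
        rw [sum_add_distrib, sum_Icc_sub_pred (fun t => Φ (V t)) hs1 (by omega)]
        ring
    _ ≤ ∑ t ∈ Icc s T, (L t (x t) - L t u) := sum_le_sum hstep

/-- Regret decomposition for the penalty surrogate: for every
`1 ≤ s ≤ T` and every comparator `u ∈ X` feasible on `{s,…,T}`,
`Σ_{t=s}^T (f̂_t(x_t) − f̂_t(u)) + Φ(V̂_T) − Φ(V̂_{s−1})
  ≤ Σ_{t=s}^T (L̂_t(x_t) − L̂_t(u))`. -/
theorem penalty_surrogate_regret_decomposition
    (d T : ℕ) (hd : 0 < d) (hT : 0 < T)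
    (X : Set (EuclideanSpace ℝ (Fin d)))
    (hXne : X.Nonempty) (hXcpt : IsCompact X) (hXconv : Convex ℝ X)
    (f g : ℕ → EuclideanSpace ℝ (Fin d) → ℝ)
    (hfconv : ∀ t ∈ Finset.Icc 1 T, ConvexOn ℝ Set.univ (f t))
    (hgconv : ∀ t ∈ Finset.Icc 1 T, ConvexOn ℝ Set.univ (g t))
    (Φ Φ' : ℝ → ℝ)
    (hΦconv : ConvexOn ℝ (Set.Ici 0) Φ)
    (hΦmono : MonotoneOn Φ (Set.Ici 0))
    (hΦderiv : ∀ v ∈ Set.Ici (0:ℝ), HasDerivAt Φ (Φ' v) v)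
    (hΦ'nonneg : ∀ v ∈ Set.Ici (0:ℝ), 0 ≤ Φ' v)
    (hΦ0 : Φ 0 = 0)
    (hΦnonneg : ∀ v ∈ Set.Ici (0:ℝ), 0 ≤ Φ v)
    -- arbitrary decisions
    (x : ℕ → EuclideanSpace ℝ (Fin d))
    (hx : ∀ t ∈ Finset.Icc 1 T, x t ∈ X)
    -- cumulative violation and surrogate losses
    (V : ℕ → ℝ)
    (hV : ∀ t, V t = ∑ τ ∈ Finset.Icc 1 t, max (g τ (x τ)) 0)
    (L : ℕ → EuclideanSpace ℝ (Fin d) → ℝ)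
    (hL : ∀ t y, L t y = f t y + Φ' (V t) * max (g t y) 0)
    -- index s and comparator
    (s : ℕ) (hs1 : 1 ≤ s) (hsT : s ≤ T)
    (u : EuclideanSpace ℝ (Fin d)) (hu : u ∈ X)
    (hufeas : ∀ t ∈ Finset.Icc s T, g t u ≤ 0) :
    ∑ t ∈ Finset.Icc s T, (f t (x t) - f t u) + Φ (V T) - Φ (V (s - 1))
      ≤ ∑ t ∈ Finset.Icc s T, (L t (x t) - L t u) :=
  penalty_surrogate_regret_decomposition_general d T f g Φ Φ' hΦconv hΦderiv x V hV L hL s hs1 hsT u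
    hufeas
end

section
/- With the quadratic penalty Φ(v) := v²/√T, the adaptive OGD iterates satisfy the explicit regret bound: for every u ∈ X with ĝ_t(u) ≤ 0 for all t ∈ {1,…,T}, Σ_{t=1}^T f̂_t(x_t) − Σ_{t=1}^T f̂_t(u) ≤ √2·D + √(2T)·D·L_f + 2·√T·D²·L_g². -/
/-!
Testing the subgradient inequality of each surrogate `L̂_t` against the feasible comparator `v`
bounds the regret plus the penalty paid, `∑ Φ′(V̂_t) ĝ_t⁺(x_t) ≥ V̂_T² / √T` (as
`2 V̂_t (V̂_t - V̂_{t-1}) ≥ V̂_t² - V̂_{t-1}²`), by the linearised regret `∑ ⟪u_t, x_t - v⟫`.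
Adaptive OGD bounds the latter by `√2 D √δ_T`, and since `L̂_t` is `(L_f + Φ′(V̂_T) L_g)`-Lipschitz,
`√δ_T ≤ 1 + √T L_f + 2 V̂_T L_g`. Completing the square in `V̂_T`, the penalty `V̂_T² / √T`
absorbs the resulting term `2 √2 D L_g V̂_T` up to `2 √T D² L_g²`.
-/

open Finset
open scoped InnerProductSpace

theorem sum_Icc_sub_mul_le {a w : ℕ → ℝ} {M : ℝ} (hw0 : 0 ≤ w 0) (hw : Monotone w) :
    ∀ n, (∀ t ∈ Icc 1 (n + 1), a t ≤ M) →
      ∑ t ∈ Icc 1 n, (a t - a (t + 1)) * w t ≤ (M - a (n + 1)) * w n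
  | 0, ha => by
    simpa using mul_nonneg (sub_nonneg.2 (ha 1 (by simp))) hw0
  | n + 1, ha => by
    have ih := sum_Icc_sub_mul_le hw0 hw n fun t ht => ha t (Icc_subset_Icc_right (by omega) ht)
    have haM := ha (n + 1) (by simp)
    rw [sum_Icc_succ_top (by omega)]
    nlinarith [mul_le_mul_of_nonneg_left (hw n.le_succ) (sub_nonneg.2 haM)]

theorem div_sqrt_add_le {c a : ℝ} (hc : 0 < c) (ha : 0 ≤ a) :
    a / √(c + a) ≤ 2 * (√(c + a) - √c) := by
  have hs : 0 < √(c + a) := Real.sqrt_pos.2 (by linarith)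
  have hmono : √c ≤ √(c + a) := Real.sqrt_le_sqrt (by linarith)
  rw [div_le_iff₀ hs]
  nlinarith [Real.sq_sqrt hc.le, Real.sq_sqrt (by linarith : 0 ≤ c + a)]

theorem sum_Icc_div_sqrt_le {a δ : ℕ → ℝ} (ha : ∀ t, 0 ≤ a t)
    (hδ : ∀ t, δ t = 1 + ∑ τ ∈ Icc 1 t, a τ) (n : ℕ) :
    ∑ t ∈ Icc 1 n, a t / √(δ t) ≤ 2 * √(δ n) - 2 := by
  induction n with
  | zero => simp [hδ]
  | succ n ih =>
    have hstep : δ (n + 1) = δ n + a (n + 1) := by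
      rw [hδ, hδ, sum_Icc_succ_top (by omega)]; ring
    have hδpos : 0 < δ n := by
      rw [hδ]; linarith [sum_nonneg fun τ (_ : τ ∈ Icc 1 n) => ha τ]
    rw [sum_Icc_succ_top (by omega), hstep]
    linarith [div_sqrt_add_le hδpos (ha (n + 1))]

theorem sq_le_sum_Icc_two_mul_mul {p V : ℕ → ℝ} (hV : ∀ t, V t = ∑ τ ∈ Icc 1 t, p τ) (n : ℕ) :
    V n ^ 2 ≤ ∑ t ∈ Icc 1 n, 2 * V t * p t := by
  induction n with
  | zero => simp [hV]
  | succ n ih =>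
    have hstep : V (n + 1) = V n + p (n + 1) := by rw [hV, hV, sum_Icc_succ_top (by omega)]
    rw [sum_Icc_succ_top (by omega), hstep]
    nlinarith [sq_nonneg (p (n + 1))]

theorem sqrt_one_add_sum_sq_le {F : Type*} [SeminormedAddCommGroup F] {T : ℕ} {u : ℕ → F}
    {K : ℝ} (hK : 0 ≤ K) (hu : ∀ t ∈ Icc 1 T, ‖u t‖ ≤ K) :
    √(1 + ∑ t ∈ Icc 1 T, ‖u t‖ ^ 2) ≤ 1 + √T * K := by
  have hsum : ∑ t ∈ Icc 1 T, ‖u t‖ ^ 2 ≤ T * K ^ 2 := by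
    simpa using sum_le_sum fun t ht => pow_le_pow_left₀ (norm_nonneg _) (hu t ht) 2
  refine Real.sqrt_le_iff.2 ⟨by positivity, ?_⟩
  nlinarith [Real.sq_sqrt (Nat.cast_nonneg T : (0 : ℝ) ≤ T), mul_nonneg (Real.sqrt_nonneg T) hK]

theorem quadratic_penalty_scalar_bound {T D Lf Lg V : ℝ} (hT : 0 < T) :
    √2 * D * (1 + √T * (Lf + 2 * V / √T * Lg)) - V ^ 2 / √T
      ≤ √2 * D + √(2 * T) * D * Lf + 2 * √T * D ^ 2 * Lg ^ 2 := by
  have hs : 0 < √T := Real.sqrt_pos.2 hT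
  have h2 : √2 ^ 2 = 2 := Real.sq_sqrt zero_le_two
  rw [Real.sqrt_mul zero_le_two, ← sub_nonneg]
  have key : √2 * D + √2 * √T * D * Lf + 2 * √T * D ^ 2 * Lg ^ 2
      - (√2 * D * (1 + √T * (Lf + 2 * V / √T * Lg)) - V ^ 2 / √T)
      = (V - √2 * √T * D * Lg) ^ 2 / √T := by
    field_simp
    linear_combination (-(√T ^ 2 * D ^ 2 * Lg ^ 2)) * h2
  rw [key]
  positivity

theorem nonneg_of_abs_sub_le_mul_norm {E : Type*} [NormedAddCommGroup E] {f : E → ℝ} {L : ℝ}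
    {p q : E} (hf : ∀ x y, |f x - f y| ≤ L * ‖x - y‖) (hpq : p ≠ q) : 0 ≤ L :=
  nonneg_of_mul_nonneg_left ((abs_nonneg _).trans (hf p q)) (norm_pos_iff.2 (sub_ne_zero.2 hpq))

section InnerProductSpace

variable {E : Type*} [NormedAddCommGroup E] [InnerProductSpace ℝ E]

theorem norm_sub_le_of_forall_norm_sub_le {X : Set E} (hX : Convex ℝ X) {p q w : E}
    (hq : q ∈ X) (hw : w ∈ X) (hmin : ∀ y ∈ X, ‖q - p‖ ≤ ‖y - p‖) : ‖q - w‖ ≤ ‖p - w‖ := by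
  have : Nonempty X := ⟨⟨q, hq⟩⟩
  have hbdd : BddBelow (Set.range fun y : X => ‖p - y‖) := ⟨0, by rintro _ ⟨y, rfl⟩; positivity⟩
  have hinf : ‖p - q‖ = ⨅ y : X, ‖p - y‖ :=
    le_antisymm (le_ciInf fun y => by simpa only [norm_sub_rev p] using hmin y y.2)
      (ciInf_le hbdd ⟨q, hq⟩)
  have hobtuse : ⟪p - q, w - q⟫_ℝ ≤ 0 := (norm_eq_iInf_iff_real_inner_le_zero hX hq).1 hinf w hw
  have hexp : ‖p - w‖ ^ 2 = ‖p - q‖ ^ 2 - 2 * ⟪p - q, w - q⟫_ℝ + ‖w - q‖ ^ 2 := by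
    rw [← norm_sub_sq_real, sub_sub_sub_cancel_right]
  rw [norm_sub_rev q w]
  exact pow_le_pow_iff_left₀ (norm_nonneg _) (norm_nonneg _) two_ne_zero |>.1
    (by nlinarith [sq_nonneg ‖p - q‖])

theorem inner_le_of_norm_sub_le {x u v q : E} {η : ℝ} (hη : 0 < η)
    (hq : ‖q - v‖ ≤ ‖x - η • u - v‖) :
    ⟪u, x - v⟫_ℝ ≤ (‖x - v‖ ^ 2 - ‖q - v‖ ^ 2) * (1 / (2 * η)) + η * ‖u‖ ^ 2 / 2 := by
  have hexp : ‖x - η • u - v‖ ^ 2 = ‖x - v‖ ^ 2 - 2 * η * ⟪u, x - v⟫_ℝ + η ^ 2 * ‖u‖ ^ 2 := by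
    rw [sub_right_comm, norm_sub_sq_real, real_inner_smul_right, real_inner_comm, norm_smul,
      Real.norm_eq_abs, mul_pow, sq_abs]
    ring
  have hsq := pow_le_pow_left₀ (norm_nonneg _) hq 2
  rw [← sub_nonneg]
  have key : (‖x - v‖ ^ 2 - ‖q - v‖ ^ 2) * (1 / (2 * η)) + η * ‖u‖ ^ 2 / 2 - ⟪u, x - v⟫_ℝ
      = (‖x - η • u - v‖ ^ 2 - ‖q - v‖ ^ 2) / (2 * η) := by
    rw [hexp]; field_simp; ring
  rw [key]
  exact div_nonneg (by linarith) (by positivity)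

theorem sum_inner_le_of_antitone {D : ℝ} {T : ℕ} {x u : ℕ → E} {v : E} {η : ℕ → ℝ}
    (hη : ∀ t, 0 < η t) (hanti : Antitone η) (hdist : ∀ t ∈ Icc 1 T, ‖x t - v‖ ≤ D)
    (hstep : ∀ t ∈ Icc 1 (T - 1), ‖x (t + 1) - v‖ ≤ ‖x t - η t • u t - v‖) :
    ∑ t ∈ Icc 1 T, ⟪u t, x t - v⟫_ℝ
      ≤ D ^ 2 * (1 / (2 * η T)) + ∑ t ∈ Icc 1 T, η t * ‖u t‖ ^ 2 / 2 := by
  classical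
  -- extending the iterates by `v` at time `T + 1` lets the last, unprojected step telescope too
  set y := Function.update x (T + 1) v
  have hyx : ∀ t ≤ T, y t = x t := fun t ht => Function.update_of_ne (by omega) v x
  have hyT : y (T + 1) = v := Function.update_self (T + 1) v x
  have hy : ∀ t ∈ Icc 1 T, ‖y (t + 1) - v‖ ≤ ‖x t - η t • u t - v‖ := by
    intro t ht
    obtain ⟨ht1, htT⟩ := mem_Icc.1 ht
    rcases htT.eq_or_lt with rfl | htT
    · simp [hyT]
    · rw [hyx (t + 1) htT]
      exact hstep t (mem_Icc.2 ⟨ht1, by omega⟩)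
  have hw : Monotone fun t => 1 / (2 * η t) := fun s t hst =>
    one_div_le_one_div_of_le (by linarith [hη t]) (by linarith [hanti hst])
  have ha : ∀ t ∈ Icc 1 (T + 1), ‖y t - v‖ ^ 2 ≤ D ^ 2 := by
    intro t ht
    obtain ⟨ht1, htT⟩ := mem_Icc.1 ht
    rcases htT.eq_or_lt with rfl | htT
    · simp [hyT]; positivity
    · rw [hyx t (by omega)]
      exact pow_le_pow_left₀ (norm_nonneg _) (hdist t (mem_Icc.2 ⟨ht1, by omega⟩)) 2
  have htel := sum_Icc_sub_mul_le (a := fun t => ‖y t - v‖ ^ 2) (by simpa using (hη 0).le) hw T ha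
  calc ∑ t ∈ Icc 1 T, ⟪u t, x t - v⟫_ℝ
      ≤ ∑ t ∈ Icc 1 T, ((‖y t - v‖ ^ 2 - ‖y (t + 1) - v‖ ^ 2) * (1 / (2 * η t))
          + η t * ‖u t‖ ^ 2 / 2) := sum_le_sum fun t ht => by
        rw [hyx t (mem_Icc.1 ht).2]; exact inner_le_of_norm_sub_le (hη t) (hy t ht)
    _ ≤ D ^ 2 * (1 / (2 * η T)) + ∑ t ∈ Icc 1 T, η t * ‖u t‖ ^ 2 / 2 := by
        rw [sum_add_distrib]
        gcongr
        simpa [hyT] using htel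

theorem adaptive_sum_inner_le {D : ℝ} (hD : 0 < D) {T : ℕ} {x u : ℕ → E} {v : E}
    {δ η : ℕ → ℝ} (hδ : ∀ t, δ t = 1 + ∑ τ ∈ Icc 1 t, ‖u τ‖ ^ 2)
    (hη : ∀ t, η t = D / (√2 * √(δ t))) (hdist : ∀ t ∈ Icc 1 T, ‖x t - v‖ ≤ D)
    (hstep : ∀ t ∈ Icc 1 (T - 1), ‖x (t + 1) - v‖ ≤ ‖x t - η t • u t - v‖) :
    ∑ t ∈ Icc 1 T, ⟪u t, x t - v⟫_ℝ ≤ √2 * D * √(δ T) := by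
  have hδpos : ∀ t, 0 < √(δ t) := fun t => Real.sqrt_pos.2 <| by
    rw [hδ]; linarith [sum_nonneg fun τ (_ : τ ∈ Icc 1 t) => sq_nonneg ‖u τ‖]
  have hδmono : Monotone δ := monotone_nat_of_le_succ fun t => by
    rw [hδ, hδ, sum_Icc_succ_top (by omega)]; linarith [sq_nonneg ‖u (t + 1)‖]
  have hηpos : ∀ t, 0 < η t := fun t => by rw [hη]; have := hδpos t; positivity
  have hanti : Antitone η := fun s t hst => by
    rw [hη, hη]; have := hδpos s; gcongr; exact hδmono hst
  have hs2 : 0 < √2 := by positivity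
  calc ∑ t ∈ Icc 1 T, ⟪u t, x t - v⟫_ℝ
      ≤ D ^ 2 * (1 / (2 * η T)) + ∑ t ∈ Icc 1 T, η t * ‖u t‖ ^ 2 / 2 :=
        sum_inner_le_of_antitone hηpos hanti hdist hstep
    _ = D * √(δ T) / √2 + D / (2 * √2) * ∑ t ∈ Icc 1 T, ‖u t‖ ^ 2 / √(δ t) := by
        rw [mul_sum]
        congr 1
        · rw [hη]; field_simp; rw [Real.sq_sqrt zero_le_two]
        · refine sum_congr rfl fun t _ => ?_
          rw [hη]; field_simp
    _ ≤ D * √(δ T) / √2 + D / (2 * √2) * (2 * √(δ T) - 2) := by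
        gcongr; exact sum_Icc_div_sqrt_le (fun t => sq_nonneg ‖u t‖) hδ T
    _ ≤ √2 * D * √(δ T) := by
        rw [← sub_nonneg]
        have key : √2 * D * √(δ T) - (D * √(δ T) / √2 + D / (2 * √2) * (2 * √(δ T) - 2))
            = D / √2 := by
          field_simp; rw [Real.sq_sqrt zero_le_two]; ring
        rw [key]; positivity

theorem norm_le_of_forall_le_add_inner {h : E → ℝ} {x u : E} {K : ℝ} (hK : 0 ≤ K)
    (hLip : ∀ y, h y - h x ≤ K * ‖y - x‖) (hsub : ∀ y, h x + ⟪u, y - x⟫_ℝ ≤ h y) :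
    ‖u‖ ≤ K := by
  have h1 := hsub (x + u)
  have h2 := hLip (x + u)
  rw [add_sub_cancel_left, real_inner_self_eq_norm_sq] at h1
  rw [add_sub_cancel_left] at h2
  rcases (norm_nonneg u).eq_or_lt with h0 | h0
  · exact h0 ▸ hK
  · exact le_of_mul_le_mul_right (by nlinarith) h0

theorem norm_le_of_subgradient_add_mul_posPart {f g L : E → ℝ} {Lf Lg c : ℝ} {x u : E}
    (hLf : 0 ≤ Lf) (hLg : 0 ≤ Lg) (hc : 0 ≤ c) (hL : ∀ y, L y = f y + c * max (g y) 0)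
    (hf : ∀ x y, |f x - f y| ≤ Lf * ‖x - y‖) (hg : ∀ x y, |g x - g y| ≤ Lg * ‖x - y‖)
    (hsub : ∀ y, L x + ⟪u, y - x⟫_ℝ ≤ L y) : ‖u‖ ≤ Lf + c * Lg := by
  refine norm_le_of_forall_le_add_inner (by positivity) (fun y => ?_) hsub
  have hmax := (abs_max_sub_max_le_abs (g y) (g x) 0).trans (hg y x)
  rw [hL, hL]
  nlinarith [le_of_abs_le (hf y x), mul_le_mul_of_nonneg_left (le_of_abs_le hmax) hc]

theorem sub_add_mul_posPart_le_inner {f g L : E → ℝ} {c : ℝ} {x u v : E}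
    (hL : ∀ y, L y = f y + c * max (g y) 0) (hsub : ∀ y, L x + ⟪u, y - x⟫_ℝ ≤ L y)
    (hv : g v ≤ 0) : f x - f v + c * max (g x) 0 ≤ ⟪u, x - v⟫_ℝ := by
  have h := hsub v
  rw [hL, hL, max_eq_right hv, mul_zero, add_zero, ← neg_sub x v, inner_neg_right] at h
  linarith

theorem sum_sub_le_sum_inner_sub_sq_div {T : ℕ} {s : ℝ} (hs : 0 < s) {f g L : ℕ → E → ℝ}
    {V : ℕ → ℝ} {x u : ℕ → E} {v : E}
    (hV : ∀ t, V t = ∑ τ ∈ Icc 1 t, max (g τ (x τ)) 0)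
    (hL : ∀ t y, L t y = f t y + 2 * V t / s * max (g t y) 0)
    (hsub : ∀ t ∈ Icc 1 T, ∀ y, L t (x t) + ⟪u t, y - x t⟫_ℝ ≤ L t y)
    (hv : ∀ t ∈ Icc 1 T, g t v ≤ 0) :
    ∑ t ∈ Icc 1 T, (f t (x t) - f t v) ≤ ∑ t ∈ Icc 1 T, ⟪u t, x t - v⟫_ℝ - V T ^ 2 / s := by
  have hpen : V T ^ 2 / s ≤ ∑ t ∈ Icc 1 T, 2 * V t / s * max (g t (x t)) 0 := by
    simp_rw [div_mul_eq_mul_div, ← sum_div]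
    gcongr
    exact sq_le_sum_Icc_two_mul_mul hV T
  have hloss := sum_le_sum fun t ht => sub_add_mul_posPart_le_inner (hL t) (hsub t ht) (hv t ht)
  rw [sum_add_distrib] at hloss
  linarith

end InnerProductSpace

theorem quadratic_penalty_ogd_regret_general
    (d T : ℕ) (hT : 0 < T)
    (X : Set (EuclideanSpace ℝ (Fin d)))
    (hXcpt : IsCompact X) (hXconv : Convex ℝ X)
    (D : ℝ) (hD : D = Metric.diam X)
    (Lf Lg : ℝ)
    (f g : ℕ → EuclideanSpace ℝ (Fin d) → ℝ)
    (hfLip : ∀ t ∈ Finset.Icc 1 T, ∀ x y, |f t x - f t y| ≤ Lf * ‖x - y‖)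
    (hgLip : ∀ t ∈ Finset.Icc 1 T, ∀ x y, |g t x - g t y| ≤ Lg * ‖x - y‖)
    -- decisions and subgradients
    (x u : ℕ → EuclideanSpace ℝ (Fin d))
    (hx : ∀ t ∈ Finset.Icc 1 T, x t ∈ X)
    -- cumulative violation and surrogate losses with quadratic penalty
    (V : ℕ → ℝ)
    (hV : ∀ t, V t = ∑ τ ∈ Finset.Icc 1 t, max (g τ (x τ)) 0)
    (L : ℕ → EuclideanSpace ℝ (Fin d) → ℝ)
    (hL : ∀ t y, L t y = f t y + (2 * V t / Real.sqrt T) * max (g t y) 0)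
    -- u t is a subgradient of L t at x t
    (hsub : ∀ t ∈ Finset.Icc 1 T, ∀ y,
      L t y ≥ L t (x t) + (inner ℝ (u t) (y - x t) : ℝ))
    -- step sizes
    (δ η : ℕ → ℝ)
    (hδ : ∀ t, δ t = 1 + ∑ τ ∈ Finset.Icc 1 t, ‖u τ‖ ^ 2)
    (hη : ∀ t, η t = D / (Real.sqrt 2 * Real.sqrt (δ t)))
    -- projected gradient update
    (hupdate : ∀ t ∈ Finset.Icc 1 (T - 1), ∀ y ∈ X,
      ‖x (t+1) - (x t - η t • u t)‖ ≤ ‖y - (x t - η t • u t)‖)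
    -- feasible comparator
    (v : EuclideanSpace ℝ (Fin d)) (hv : v ∈ X)
    (hvfeas : ∀ t ∈ Finset.Icc 1 T, g t v ≤ 0) :
    ∑ t ∈ Finset.Icc 1 T, f t (x t) - ∑ t ∈ Finset.Icc 1 T, f t v
      ≤ Real.sqrt 2 * D + Real.sqrt (2 * T) * D * Lf
          + 2 * Real.sqrt T * D ^ 2 * Lg ^ 2 := by
  have hdist : ∀ t ∈ Icc 1 T, ‖x t - v‖ ≤ D := fun t ht => by
    rw [hD, ← dist_eq_norm]; exact Metric.dist_le_diam_of_mem hXcpt.isBounded (hx t ht) hv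
  rcases (hD ▸ Metric.diam_nonneg : 0 ≤ D).eq_or_lt with rfl | hDpos
  · have hxv : ∀ t ∈ Icc 1 T, f t (x t) = f t v := fun t ht => by
      rw [sub_eq_zero.1 (norm_le_zero_iff.1 (hdist t ht))]
    simp [sum_congr rfl hxv]
  obtain ⟨p, -, q, -, hpq⟩ : X.Nontrivial :=
    Set.not_subsingleton_iff.1 fun h => hDpos.ne' (hD.trans (Metric.diam_subsingleton h))
  have h1T : 1 ∈ Icc 1 T := mem_Icc.2 ⟨le_rfl, hT⟩
  have hLf := nonneg_of_abs_sub_le_mul_norm (hfLip 1 h1T) hpq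
  have hLg := nonneg_of_abs_sub_le_mul_norm (hgLip 1 h1T) hpq
  have hsT : 0 < √(T : ℝ) := Real.sqrt_pos.2 (Nat.cast_pos.2 hT)
  have hV0 : ∀ t, 0 ≤ V t := fun t => hV t ▸ sum_nonneg fun _ _ => le_max_right _ _
  have hVmono : Monotone V := monotone_nat_of_le_succ fun t => by
    rw [hV, hV, sum_Icc_succ_top (by omega)]; exact le_add_of_nonneg_right (le_max_right _ _)
  have hnorm : ∀ t ∈ Icc 1 T, ‖u t‖ ≤ Lf + 2 * V T / √T * Lg := fun t ht =>
    (norm_le_of_subgradient_add_mul_posPart hLf hLg (by have := hV0 t; positivity) (hL t)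
      (hfLip t ht) (hgLip t ht) (hsub t ht)).trans (by gcongr; exact hVmono (mem_Icc.1 ht).2)
  have hogd := adaptive_sum_inner_le hDpos hδ hη hdist fun t ht =>
    (norm_sub_le_of_forall_norm_sub_le hXconv (hx (t + 1) (by simp at ht ⊢; omega)) hv
      (hupdate t ht)).trans_eq (by rw [sub_right_comm])
  have hsqrt := hδ T ▸ sqrt_one_add_sum_sq_le (by have := hV0 T; positivity) hnorm
  calc ∑ t ∈ Icc 1 T, f t (x t) - ∑ t ∈ Icc 1 T, f t v
      ≤ ∑ t ∈ Icc 1 T, ⟪u t, x t - v⟫_ℝ - V T ^ 2 / √T := by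
        rw [← sum_sub_distrib]; exact sum_sub_le_sum_inner_sub_sq_div hsT hV hL hsub hvfeas
    _ ≤ √2 * D * (1 + √T * (Lf + 2 * V T / √T * Lg)) - V T ^ 2 / √T := by
        gcongr; exact hogd.trans (by gcongr)
    _ ≤ _ := quadratic_penalty_scalar_bound (Nat.cast_pos.2 hT)

/-- With the quadratic penalty `Φ(v) = v²/√T` (so `Φ′(v) = 2v/√T`),
adaptive OGD satisfies, for every feasible comparator `u`,
`Σ f̂_t(x_t) − Σ f̂_t(u) ≤ √2·D + √(2T)·D·L_f + 2·√T·D²·L_g²`. -/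
theorem quadratic_penalty_ogd_regret
    (d T : ℕ) (hd : 0 < d) (hT : 0 < T)
    (X : Set (EuclideanSpace ℝ (Fin d)))
    (hXne : X.Nonempty) (hXcpt : IsCompact X) (hXconv : Convex ℝ X)
    (D : ℝ) (hD : D = Metric.diam X)
    (Lf Lg : ℝ)
    (f g : ℕ → EuclideanSpace ℝ (Fin d) → ℝ)
    (hfconv : ∀ t ∈ Finset.Icc 1 T, ConvexOn ℝ Set.univ (f t))
    (hgconv : ∀ t ∈ Finset.Icc 1 T, ConvexOn ℝ Set.univ (g t))
    (hfLip : ∀ t ∈ Finset.Icc 1 T, ∀ x y, |f t x - f t y| ≤ Lf * ‖x - y‖)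
    (hgLip : ∀ t ∈ Finset.Icc 1 T, ∀ x y, |g t x - g t y| ≤ Lg * ‖x - y‖)
    -- decisions and subgradients
    (x u : ℕ → EuclideanSpace ℝ (Fin d))
    (hx : ∀ t ∈ Finset.Icc 1 T, x t ∈ X)
    -- cumulative violation and surrogate losses with quadratic penalty
    (V : ℕ → ℝ)
    (hV : ∀ t, V t = ∑ τ ∈ Finset.Icc 1 t, max (g τ (x τ)) 0)
    (L : ℕ → EuclideanSpace ℝ (Fin d) → ℝ)
    (hL : ∀ t y, L t y = f t y + (2 * V t / Real.sqrt T) * max (g t y) 0)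
    -- u t is a subgradient of L t at x t
    (hsub : ∀ t ∈ Finset.Icc 1 T, ∀ y,
      L t y ≥ L t (x t) + (inner ℝ (u t) (y - x t) : ℝ))
    -- step sizes
    (δ η : ℕ → ℝ)
    (hδ : ∀ t, δ t = 1 + ∑ τ ∈ Finset.Icc 1 t, ‖u τ‖ ^ 2)
    (hη : ∀ t, η t = D / (Real.sqrt 2 * Real.sqrt (δ t)))
    -- projected gradient update
    (hupdate : ∀ t ∈ Finset.Icc 1 (T - 1), ∀ y ∈ X,
      ‖x (t+1) - (x t - η t • u t)‖ ≤ ‖y - (x t - η t • u t)‖)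
    -- feasible comparator
    (v : EuclideanSpace ℝ (Fin d)) (hv : v ∈ X)
    (hvfeas : ∀ t ∈ Finset.Icc 1 T, g t v ≤ 0) :
    ∑ t ∈ Finset.Icc 1 T, f t (x t) - ∑ t ∈ Finset.Icc 1 T, f t v
      ≤ Real.sqrt 2 * D + Real.sqrt (2 * T) * D * Lf
          + 2 * Real.sqrt T * D ^ 2 * Lg ^ 2 :=
  quadratic_penalty_ogd_regret_general d T hT X hXcpt hXconv D hD Lf Lg f g hfLip hgLip x u hx V hV
    L hL hsub δ η hδ hη hupdate v hv hvfeas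
end

section
/- Memory-deviation bound along adaptive OGD iterates: let m ≥ 1 be an integer with T ≥ m+1, and for t = m+1,…,T let h_t : (ℝ^d)^{m+1} → ℝ be L-Lipschitz with respect to the Euclidean norm on the product (ℝ^d)^{m+1}. Then Σ_{t=m+1}^{T} |h_t(x_{t−m}, x_{t−m+1}, …, x_t) − h_t(x_t, x_t, …, x_t)| ≤ m^{3/2}·L·(D/√2)·√(T·log(1 + Σ_{t=1}^{T} ‖u_t‖²)). -/
/-!
Within a window, `x_{t-m+i}` differs from `x_t` by at most the path length
`W_t = ∑_{s=t-m}^{t-1} ‖x_{s+1} - x_s‖`, and the last coordinate agrees exactly, so Lipschitz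
continuity bounds the `t`-th deviation by `L √m W_t`. Every step lies in at most `m` windows,
so the total is at most `m^{3/2} L ∑_s ‖x_{s+1} - x_s‖`. Projection onto a convex set is
nonexpansive, hence `‖x_{s+1} - x_s‖ ≤ η_s ‖u_s‖`; Cauchy–Schwarz and the estimate
`∑_s a_s / (1 + ∑_{τ ≤ s} a_τ) ≤ log (1 + ∑_τ a_τ)` (from `log y ≤ y - 1`) then bound
`∑_s ‖u_s‖ / √δ_s` by `√(T log δ_T)`.
-/

open Finset Real
open scoped RealInnerProductSpace

theorem Convex.norm_sub_le_of_nearest {E : Type*} [NormedAddCommGroup E] [InnerProductSpace ℝ E]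
    {X : Set E} (hX : Convex ℝ X) {p q z : E} (hp : p ∈ X) (hq : q ∈ X)
    (hnearest : ∀ y ∈ X, ‖p - z‖ ≤ ‖y - z‖) : ‖p - q‖ ≤ ‖z - q‖ := by
  have : Nonempty X := ⟨⟨p, hp⟩⟩
  have hinf : ‖z - p‖ = ⨅ y : X, ‖z - y‖ :=
    le_antisymm (le_ciInf fun y => by simpa only [norm_sub_rev z] using hnearest y y.2)
      (ciInf_le (f := fun y : X => ‖z - y‖) ⟨0, fun _ ⟨_, h⟩ => h ▸ norm_nonneg _⟩ ⟨p, hp⟩)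
  have hobtuse : ⟪z - p, q - p⟫ ≤ 0 := (norm_eq_iInf_iff_real_inner_le_zero hX hp).1 hinf q hq
  have hcosine : ‖z - q‖ ^ 2 = ‖z - p‖ ^ 2 - 2 * ⟪z - p, q - p⟫ + ‖p - q‖ ^ 2 := by
    rw [show z - q = (z - p) - (q - p) by abel, norm_sub_sq_real, ← norm_neg (q - p), neg_sub]
  exact pow_le_pow_iff_left₀ (norm_nonneg _) (norm_nonneg _) two_ne_zero |>.1
    (by linarith [sq_nonneg ‖z - p‖])

theorem Convex.dist_le_of_nearest_sub_smul {E : Type*} [NormedAddCommGroup E]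
    [InnerProductSpace ℝ E] {X : Set E} (hX : Convex ℝ X) {p q v : E} {η : ℝ} (hη : 0 ≤ η)
    (hp : p ∈ X) (hq : q ∈ X) (hnearest : ∀ y ∈ X, ‖p - (q - η • v)‖ ≤ ‖y - (q - η • v)‖) :
    dist q p ≤ η * ‖v‖ := by
  rw [dist_comm, dist_eq_norm]
  refine (hX.norm_sub_le_of_nearest hp hq hnearest).trans_eq ?_
  rw [sub_sub_cancel_left, norm_neg, norm_smul, Real.norm_of_nonneg hη]

theorem sum_div_one_add_sum_le_log (b : ℕ → ℝ) (hb : ∀ s, 0 ≤ b s) (N : ℕ) :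
    ∑ s ∈ Icc 1 N, b s / (1 + ∑ τ ∈ Icc 1 s, b τ) ≤ log (1 + ∑ τ ∈ Icc 1 N, b τ) := by
  induction N with
  | zero => simp
  | succ N ih =>
    set δ : ℕ → ℝ := fun s => 1 + ∑ τ ∈ Icc 1 s, b τ
    have hδpos : ∀ s, 0 < δ s := fun s => by have := sum_nonneg fun τ (_ : τ ∈ Icc 1 s) => hb τ; positivity
    have hδsucc : δ (N + 1) = δ N + b (N + 1) := by
      simp only [δ, sum_Icc_succ_top (Nat.le_add_left 1 N)]; ring
    have hlog_ratio : log (δ N) - log (δ (N + 1)) ≤ δ N / δ (N + 1) - 1 := by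
      rw [← log_div (hδpos N).ne' (hδpos _).ne']
      exact log_le_sub_one_of_pos (div_pos (hδpos N) (hδpos _))
    have hincrement : δ N / δ (N + 1) - 1 = -(b (N + 1) / δ (N + 1)) := by
      field_simp [(hδpos (N + 1)).ne']; rw [hδsucc]; ring
    rw [sum_Icc_succ_top (Nat.le_add_left 1 N)]
    change _ + b (N + 1) / δ (N + 1) ≤ log (δ (N + 1))
    linarith [show _ ≤ log (δ N) from ih]

theorem sum_div_sqrt_one_add_sum_sq_le (a : ℕ → ℝ) (N : ℕ) :
    ∑ s ∈ Ico 1 N, a s / √(1 + ∑ τ ∈ Icc 1 s, a τ ^ 2)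
      ≤ √(N * log (1 + ∑ τ ∈ Icc 1 N, a τ ^ 2)) := by
  set δ : ℕ → ℝ := fun s => 1 + ∑ τ ∈ Icc 1 s, a τ ^ 2
  have hδpos : ∀ s, 0 < δ s := fun s => by positivity
  have hsq : ∀ s, (a s / √(δ s)) ^ 2 = a s ^ 2 / δ s := fun s => by
    rw [div_pow, sq_sqrt (hδpos s).le]
  have hterm_nonneg : ∀ s, 0 ≤ a s ^ 2 / δ s := fun s => div_nonneg (sq_nonneg _) (hδpos s).le
  have hcard : ((#(Ico 1 N) : ℕ) : ℝ) ≤ N := by simp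
  refine le_trans (le_abs_self _) (abs_le_sqrt ?_)
  calc (∑ s ∈ Ico 1 N, a s / √(δ s)) ^ 2
      ≤ #(Ico 1 N) * ∑ s ∈ Ico 1 N, a s ^ 2 / δ s := by
        simpa only [hsq] using sq_sum_le_card_mul_sum_sq (s := Ico 1 N) (f := fun s => a s / √(δ s))
    _ ≤ N * ∑ s ∈ Icc 1 N, a s ^ 2 / δ s := by
        gcongr
        · exact Ico_subset_Icc_self

    _ ≤ N * log (δ N) := by
        gcongr
        exact sum_div_one_add_sum_le_log (fun s => a s ^ 2) (fun s => sq_nonneg _) N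

theorem sum_sum_Ico_window_le (c : ℕ → ℝ) (hc : ∀ s, 0 ≤ c s) (m T : ℕ) :
    ∑ t ∈ Icc (m + 1) T, ∑ s ∈ Ico (t - m) t, c s ≤ m * ∑ s ∈ Ico 1 T, c s := by
  rw [sum_comm' (t' := Ico 1 T) (s' := fun s => Icc (max (m + 1) (s + 1)) (min T (s + m)))
    (fun t s => by simp only [mem_Icc, mem_Ico]; omega), mul_sum]
  gcongr with s
  rw [sum_const, nsmul_eq_mul]
  gcongr
  · exact hc s
  · rw [Nat.card_Icc]; omega

theorem norm_sub_le_sum_window {E : Type*} [SeminormedAddCommGroup E] (x : ℕ → E)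
    {m t j : ℕ} (hj : j ≤ m) (hmt : m ≤ t) :
    ‖x (t - m + j) - x t‖ ≤ ∑ s ∈ Ico (t - m) t, dist (x s) (x (s + 1)) := by
  rw [← dist_eq_norm]
  exact (dist_le_Ico_sum_dist x (by omega)).trans <|
    sum_le_sum_of_subset_of_nonneg (Ico_subset_Ico (by omega) le_rfl) fun _ _ _ => dist_nonneg

theorem sqrt_sum_norm_sub_sq_le {E : Type*} [SeminormedAddCommGroup E] {m : ℕ}
    (z : Fin (m + 1) → E) {w : E} {r : ℝ} (hlast : z (Fin.last m) = w)
    (hr : ∀ i, ‖z i - w‖ ≤ r) : √(∑ i, ‖z i - w‖ ^ 2) ≤ √m * r := by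
  have hr0 : 0 ≤ r := by simpa [hlast] using hr (Fin.last m)
  have hsum : ∑ i, ‖z i - w‖ ^ 2 ≤ m * r ^ 2 := by
    rw [Fin.sum_univ_castSucc, hlast, sub_self, norm_zero]
    calc ∑ i : Fin m, ‖z i.castSucc - w‖ ^ 2 + 0 ^ 2 ≤ ∑ _i : Fin m, r ^ 2 + 0 := by
          gcongr with i; exacts [hr _, le_of_eq (zero_pow two_ne_zero)]
      _ = m * r ^ 2 := by simp
  calc √(∑ i, ‖z i - w‖ ^ 2) ≤ √(m * r ^ 2) := sqrt_le_sqrt hsum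
    _ = √m * r := by rw [sqrt_mul (Nat.cast_nonneg m), sqrt_sq hr0]

theorem nonneg_of_abs_sub_le_mul_sqrt_sum_sq {ι E : Type*} [Fintype ι] [Nonempty ι]
    [NormedAddCommGroup E] [Nontrivial E] {F : (ι → E) → ℝ} {C : ℝ}
    (hF : ∀ z w : ι → E, |F z - F w| ≤ C * √(∑ i, ‖z i - w i‖ ^ 2)) : 0 ≤ C := by
  obtain ⟨v, hv⟩ := exists_ne (0 : E)
  have hpos : 0 < √(∑ _i : ι, ‖v - 0‖ ^ 2) :=
    sqrt_pos.2 (sum_pos (fun _ _ => by rw [sub_zero]; exact pow_pos (norm_pos_iff.2 hv) 2) univ_nonempty)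
  exact nonneg_of_mul_nonneg_left ((abs_nonneg _).trans (hF (fun _ => v) (fun _ => 0))) hpos

theorem sum_dist_adaptive_projected_steps_le {E : Type*} [NormedAddCommGroup E]
    [InnerProductSpace ℝ E] {X : Set E} (hX : Convex ℝ X) {D : ℝ} (hD : 0 ≤ D) {x u : ℕ → E}
    {η : ℕ → ℝ} {T : ℕ} (hη : ∀ t, η t = D / (√2 * √(1 + ∑ τ ∈ Icc 1 t, ‖u τ‖ ^ 2)))
    (hx : ∀ t ∈ Icc 1 T, x t ∈ X)
    (hupdate : ∀ t ∈ Icc 1 (T - 1), ∀ y ∈ X,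
      ‖x (t + 1) - (x t - η t • u t)‖ ≤ ‖y - (x t - η t • u t)‖) :
    ∑ s ∈ Ico 1 T, dist (x s) (x (s + 1))
      ≤ D / √2 * √(T * log (1 + ∑ τ ∈ Icc 1 T, ‖u τ‖ ^ 2)) := by
  have hstep : ∀ s ∈ Ico 1 T,
      dist (x s) (x (s + 1)) ≤ D / √2 * (‖u s‖ / √(1 + ∑ τ ∈ Icc 1 s, ‖u τ‖ ^ 2)) := by
    intro s hs
    obtain ⟨hs1, hsT⟩ := mem_Ico.1 hs
    have hη0 : 0 ≤ η s := by rw [hη]; positivity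
    refine (hX.dist_le_of_nearest_sub_smul hη0 (hx (s + 1) (by simp; omega))
      (hx s (by simp; omega)) (hupdate s (by simp; omega))).trans_eq ?_
    rw [hη]; ring
  calc ∑ s ∈ Ico 1 T, dist (x s) (x (s + 1))
      ≤ ∑ s ∈ Ico 1 T, D / √2 * (‖u s‖ / √(1 + ∑ τ ∈ Icc 1 s, ‖u τ‖ ^ 2)) := sum_le_sum hstep
    _ = D / √2 * ∑ s ∈ Ico 1 T, ‖u s‖ / √(1 + ∑ τ ∈ Icc 1 s, ‖u τ‖ ^ 2) := (mul_sum ..).symm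
    _ ≤ D / √2 * √(T * log (1 + ∑ τ ∈ Icc 1 T, ‖u τ‖ ^ 2)) := by
      gcongr; exact sum_div_sqrt_one_add_sum_sq_le (fun s => ‖u s‖) T

theorem memory_deviation_bound_general
    (d T : ℕ) (hd : 0 < d)
    (X : Set (EuclideanSpace ℝ (Fin d)))
    (hXconv : Convex ℝ X)
    (D : ℝ) (hD : D = Metric.diam X)
    -- decisions and subgradients
    (x u : ℕ → EuclideanSpace ℝ (Fin d))
    (hx : ∀ t ∈ Finset.Icc 1 T, x t ∈ X)
    -- step sizes
    (δ η : ℕ → ℝ)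
    (hδ : ∀ t, δ t = 1 + ∑ τ ∈ Finset.Icc 1 t, ‖u τ‖ ^ 2)
    (hη : ∀ t, η t = D / (Real.sqrt 2 * Real.sqrt (δ t)))
    -- projected gradient update
    (hupdate : ∀ t ∈ Finset.Icc 1 (T - 1), ∀ y ∈ X,
      ‖x (t+1) - (x t - η t • u t)‖ ≤ ‖y - (x t - η t • u t)‖)
    -- memory length and memory-dependent functions
    (m : ℕ) (hTm : m + 1 ≤ T)
    (Lc : ℝ)
    (h : ℕ → (Fin (m + 1) → EuclideanSpace ℝ (Fin d)) → ℝ)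
    -- each h t is Lc-Lipschitz w.r.t. the Euclidean norm on the product
    (hhLip : ∀ t ∈ Finset.Icc (m + 1) T, ∀ z w : Fin (m + 1) → EuclideanSpace ℝ (Fin d),
      |h t z - h t w| ≤ Lc * Real.sqrt (∑ i, ‖z i - w i‖ ^ 2)) :
    ∑ t ∈ Finset.Icc (m + 1) T,
        |h t (fun i => x (t - m + (i : ℕ))) - h t (fun _ => x t)|
      ≤ (m : ℝ) ^ ((3:ℝ)/2) * Lc * (D / Real.sqrt 2)
          * Real.sqrt (T * Real.log (1 + ∑ t ∈ Finset.Icc 1 T, ‖u t‖ ^ 2)) := by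
  have : Nonempty (Fin d) := ⟨⟨0, hd⟩⟩
  have hLc : 0 ≤ Lc := nonneg_of_abs_sub_le_mul_sqrt_sum_sq (hhLip (m + 1) (by simp [hTm]))
  set W : ℕ → ℝ := fun t => ∑ s ∈ Ico (t - m) t, dist (x s) (x (s + 1))
  have hwindow : ∀ t ∈ Icc (m + 1) T,
      |h t (fun i => x (t - m + (i : ℕ))) - h t (fun _ => x t)| ≤ Lc * √m * W t := by
    intro t ht
    have hmt : m ≤ t := by simp at ht; omega
    refine (hhLip t ht _ _).trans ?_
    rw [mul_assoc]
    gcongr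
    exact sqrt_sum_norm_sub_sq_le _ (by rw [Fin.val_last, Nat.sub_add_cancel hmt])
      fun i => norm_sub_le_sum_window x (Nat.lt_succ_iff.1 i.isLt) hmt
  have hsteps := sum_dist_adaptive_projected_steps_le hXconv (hD ▸ Metric.diam_nonneg)
    (fun t => (hη t).trans (by rw [hδ])) hx hupdate
  have hm32 : (m : ℝ) ^ ((3:ℝ)/2) = m * √m := by
    rw [sqrt_eq_rpow, show (3:ℝ)/2 = 1 + 1/2 by norm_num,
      rpow_add' (Nat.cast_nonneg m) (by norm_num), rpow_one]
  calc ∑ t ∈ Icc (m + 1) T, |h t (fun i => x (t - m + (i : ℕ))) - h t (fun _ => x t)|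
      ≤ Lc * √m * ∑ t ∈ Icc (m + 1) T, W t := by rw [mul_sum]; exact sum_le_sum hwindow
    _ ≤ Lc * √m * (m * ∑ s ∈ Ico 1 T, dist (x s) (x (s + 1))) := by
      gcongr; exact sum_sum_Ico_window_le _ (fun _ => dist_nonneg) m T
    _ ≤ Lc * √m * (m * (D / √2 * √(T * log (1 + ∑ t ∈ Icc 1 T, ‖u t‖ ^ 2)))) := by gcongr
    _ = _ := by rw [hm32]; ring

/-- Memory-deviation bound along adaptive OGD iterates: if each
`h_t : (ℝ^d)^{m+1} → ℝ` is `L`-Lipschitz w.r.t. the Euclidean norm on the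
product, then
`Σ_{t=m+1}^T |h_t(x_{t−m},…,x_t) − h_t(x_t,…,x_t)|
   ≤ m^{3/2}·L·(D/√2)·√(T·log(1 + Σ_{t=1}^T ‖u_t‖²))`. -/
theorem memory_deviation_bound
    (d T : ℕ) (hd : 0 < d) (hT : 0 < T)
    (X : Set (EuclideanSpace ℝ (Fin d)))
    (hXne : X.Nonempty) (hXcpt : IsCompact X) (hXconv : Convex ℝ X)
    (D : ℝ) (hD : D = Metric.diam X)
    (f g : ℕ → EuclideanSpace ℝ (Fin d) → ℝ)
    (hfconv : ∀ t ∈ Finset.Icc 1 T, ConvexOn ℝ Set.univ (f t))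
    (hgconv : ∀ t ∈ Finset.Icc 1 T, ConvexOn ℝ Set.univ (g t))
    (Φ Φ' : ℝ → ℝ)
    (hΦconv : ConvexOn ℝ (Set.Ici 0) Φ)
    (hΦmono : MonotoneOn Φ (Set.Ici 0))
    (hΦderiv : ∀ v ∈ Set.Ici (0:ℝ), HasDerivAt Φ (Φ' v) v)
    (hΦ'nonneg : ∀ v ∈ Set.Ici (0:ℝ), 0 ≤ Φ' v)
    (hΦ0 : Φ 0 = 0)
    (hΦnonneg : ∀ v ∈ Set.Ici (0:ℝ), 0 ≤ Φ v)
    -- decisions and subgradients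
    (x u : ℕ → EuclideanSpace ℝ (Fin d))
    (hx : ∀ t ∈ Finset.Icc 1 T, x t ∈ X)
    -- cumulative violation and surrogate losses
    (V : ℕ → ℝ)
    (hV : ∀ t, V t = ∑ τ ∈ Finset.Icc 1 t, max (g τ (x τ)) 0)
    (L : ℕ → EuclideanSpace ℝ (Fin d) → ℝ)
    (hL : ∀ t y, L t y = f t y + Φ' (V t) * max (g t y) 0)
    -- u t is a subgradient of L t at x t
    (hsub : ∀ t ∈ Finset.Icc 1 T, ∀ y,
      L t y ≥ L t (x t) + (inner ℝ (u t) (y - x t) : ℝ))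
    -- step sizes
    (δ η : ℕ → ℝ)
    (hδ : ∀ t, δ t = 1 + ∑ τ ∈ Finset.Icc 1 t, ‖u τ‖ ^ 2)
    (hη : ∀ t, η t = D / (Real.sqrt 2 * Real.sqrt (δ t)))
    -- projected gradient update
    (hupdate : ∀ t ∈ Finset.Icc 1 (T - 1), ∀ y ∈ X,
      ‖x (t+1) - (x t - η t • u t)‖ ≤ ‖y - (x t - η t • u t)‖)
    -- memory length and memory-dependent functions
    (m : ℕ) (hm : 1 ≤ m) (hTm : m + 1 ≤ T)
    (Lc : ℝ)
    (h : ℕ → (Fin (m + 1) → EuclideanSpace ℝ (Fin d)) → ℝ)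
    -- each h t is Lc-Lipschitz w.r.t. the Euclidean norm on the product
    (hhLip : ∀ t ∈ Finset.Icc (m + 1) T, ∀ z w : Fin (m + 1) → EuclideanSpace ℝ (Fin d),
      |h t z - h t w| ≤ Lc * Real.sqrt (∑ i, ‖z i - w i‖ ^ 2)) :
    ∑ t ∈ Finset.Icc (m + 1) T,
        |h t (fun i => x (t - m + (i : ℕ))) - h t (fun _ => x t)|
      ≤ (m : ℝ) ^ ((3:ℝ)/2) * Lc * (D / Real.sqrt 2)
          * Real.sqrt (T * Real.log (1 + ∑ t ∈ Finset.Icc 1 T, ‖u t‖ ^ 2)) :=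
  memory_deviation_bound_general d T hd X hXconv D hD x u hx δ η hδ hη hupdate m hTm Lc h hhLip
end

section
/- Regret decomposition with delayed penalty multiplier: for every u ∈ ℝ^d with g_t(u,…,u) ≤ 0 for all t ∈ {m+1,…,T}, one has Φ(V_T) − Φ(V_m) + Σ_{t=m+1}^{T} [f_t(x_{t−m},…,x_t) − f_t(u,…,u)] ≤ Σ_{t=m+1}^{T} [L_t(x_{t−m},…,x_t) − L_t(u,…,u)] + G·(m+1)·Φ′(V_T). -/
/-!
The violation `V` is nondecreasing, so by the mean value theorem and monotonicity of `Φ'` each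
increment satisfies `Φ(V_t) − Φ(V_{t−1}) ≤ Φ'(V_t) g_t⁺`; summing, `Φ(V_T) − Φ(V_m)` is at most
`Σ_t Φ'(V_t) g_t⁺`. The surrogate losses charge `Φ'(V_{t−m−1}) g_t⁺` instead (and nothing at the
feasible comparator), and since `g_t⁺ ≤ G` the discrepancy is at most
`G · Σ_t (Φ'(V_t) − Φ'(V_{t−m−1}))`, a sum that telescopes to the `m + 1` largest terms
`Φ'(V_{T−m}), …, Φ'(V_T) ≤ Φ'(V_T)`.
-/

open Finset

lemma sub_le_deriv_mul_sub_of_monotoneOn {Φ Φ' : ℝ → ℝ} {s : Set ℝ} (hs : s.OrdConnected)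
    (hΦ : ∀ x ∈ s, HasDerivAt Φ (Φ' x) x) (hΦ' : MonotoneOn Φ' s)
    {a b : ℝ} (ha : a ∈ s) (hb : b ∈ s) (hab : a ≤ b) :
    Φ b - Φ a ≤ Φ' b * (b - a) := by
  have hsub : Set.Icc a b ⊆ s := hs.out ha hb
  have hΦint : ∀ x ∈ interior (Set.Icc a b), HasDerivAt Φ (Φ' x) x :=
    fun x hx => hΦ x (hsub (interior_subset hx))
  refine (convex_Icc a b).image_sub_le_mul_sub_of_deriv_le
    (fun x hx => (hΦ x (hsub hx)).continuousAt.continuousWithinAt)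
    (fun x hx => (hΦint x hx).differentiableAt.differentiableWithinAt)
    (fun x hx => ?_) a (Set.left_mem_Icc.2 hab) b (Set.right_mem_Icc.2 hab) hab
  rw [(hΦint x hx).deriv]
  rw [interior_Icc] at hx
  exact hΦ' (hsub (Set.Ioo_subset_Icc_self hx)) hb hx.2.le

lemma sub_le_sum_deriv_mul_sub {Φ Φ' : ℝ → ℝ} {s : Set ℝ} (hs : s.OrdConnected)
    (hΦ : ∀ x ∈ s, HasDerivAt Φ (Φ' x) x) (hΦ' : MonotoneOn Φ' s)
    {v : ℕ → ℝ} {m n : ℕ} (hmn : m ≤ n) (hv : MonotoneOn v (Set.Icc m n))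
    (hvs : ∀ t ∈ Set.Icc m n, v t ∈ s) :
    Φ (v n) - Φ (v m) ≤ ∑ t ∈ Icc (m + 1) n, Φ' (v t) * (v t - v (t - 1)) := by
  induction n, hmn using Nat.le_induction with
  | base => simp
  | succ n hmn ih =>
    have hn : n ∈ Set.Icc m (n + 1) := ⟨hmn, n.le_succ⟩
    have hn1 : n + 1 ∈ Set.Icc m (n + 1) := ⟨by omega, le_rfl⟩
    have hsub : Set.Icc m n ⊆ Set.Icc m (n + 1) := Set.Icc_subset_Icc_right n.le_succ
    have hstep : Φ (v (n + 1)) - Φ (v n) ≤ Φ' (v (n + 1)) * (v (n + 1) - v n) :=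
      sub_le_deriv_mul_sub_of_monotoneOn hs hΦ hΦ' (hvs n hn) (hvs (n + 1) hn1)
        (hv hn hn1 n.le_succ)
    rw [sum_Icc_succ_top (by omega), Nat.add_sub_cancel]
    linarith [ih (hv.mono hsub) fun t ht => hvs t (hsub ht)]

lemma sum_range_sub_shift {M : Type*} [AddCommGroup M] (q : ℕ → M) (k N : ℕ) :
    ∑ i ∈ range N, (q (k + i) - q i) = ∑ j ∈ range k, (q (N + j) - q j) := by
  have hkN := sum_range_add q k N
  rw [add_comm k N, sum_range_add q N k] at hkN
  simp only [sum_sub_distrib]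
  rw [sub_eq_sub_iff_add_eq_add, add_comm, ← hkN, add_comm]

lemma sum_Icc_sub_lag_le {q : ℕ → ℝ} {k n : ℕ} (hk : k ≤ n + 1)
    (hq : MonotoneOn q (Set.Iic n)) (hq0 : 0 ≤ q 0) :
    ∑ t ∈ Icc k n, (q t - q (t - k)) ≤ k * q n := by
  rw [← Ico_add_one_right_eq_Icc, sum_Ico_eq_sum_range]
  simp only [Nat.add_sub_cancel_left]
  rw [sum_range_sub_shift]
  have hterm : ∀ j ∈ range k, q (n + 1 - k + j) - q j ≤ q n := by
    intro j hj
    have hj : j < k := mem_range.1 hj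
    have hqj : q 0 ≤ q j :=
      hq (Set.mem_Iic.2 (Nat.zero_le n)) (Set.mem_Iic.2 (by omega)) j.zero_le
    have hqN : q (n + 1 - k + j) ≤ q n :=
      hq (Set.mem_Iic.2 (by omega)) (Set.mem_Iic.2 le_rfl) (by omega)
    linarith
  simpa using sum_le_card_nsmul _ _ _ hterm

lemma sum_sub_lag_mul_le {q p : ℕ → ℝ} {G : ℝ} {k n : ℕ} (hk : k ≤ n + 1)
    (hq : MonotoneOn q (Set.Iic n)) (hq0 : 0 ≤ q 0) (hG : 0 ≤ G)
    (hp : ∀ t ∈ Icc k n, p t ≤ G) :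
    ∑ t ∈ Icc k n, (q t - q (t - k)) * p t ≤ G * k * q n :=
  calc ∑ t ∈ Icc k n, (q t - q (t - k)) * p t
      ≤ ∑ t ∈ Icc k n, (q t - q (t - k)) * G := by
        refine sum_le_sum fun t ht => mul_le_mul_of_nonneg_left (hp t ht) ?_
        have ht : t ≤ n := (mem_Icc.1 ht).2
        exact sub_nonneg.2 (hq (Set.mem_Iic.2 (by omega)) (Set.mem_Iic.2 ht) (t.sub_le k))
    _ = G * ∑ t ∈ Icc k n, (q t - q (t - k)) := by rw [← sum_mul, mul_comm]
    _ ≤ G * (k * q n) := mul_le_mul_of_nonneg_left (sum_Icc_sub_lag_le hk hq hq0) hG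
    _ = G * k * q n := (mul_assoc _ _ _).symm

theorem regret_decomposition_delayed_multiplier_general
    (d m T : ℕ) (hT : m + 1 ≤ T)
    -- arbitrary decisions
    (x : ℕ → EuclideanSpace ℝ (Fin d))
    (f g : ℕ → (Fin (m + 1) → EuclideanSpace ℝ (Fin d)) → ℝ)
    (G : ℝ) (hG : 0 ≤ G)
    -- 0 ≤ g_t⁺ ≤ G pointwise
    (hgbd : ∀ t z, max (g t z) 0 ≤ G)
    -- cumulative violation
    (V : ℕ → ℝ)
    (hV0 : ∀ t ≤ m, V t = 0)
    (hVrec : ∀ t, m + 1 ≤ t → t ≤ T →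
      V t = V (t - 1) + max (g t (fun i => x (t - m + (i : ℕ)))) 0)
    -- penalty function: convex, differentiable, Φ′ nonnegative and nondecreasing
    (Φ Φ' : ℝ → ℝ)
    (hΦderiv : ∀ v ∈ Set.Ici (0:ℝ), HasDerivAt Φ (Φ' v) v)
    (hΦ'nonneg : ∀ v ∈ Set.Ici (0:ℝ), 0 ≤ Φ' v)
    (hΦ'mono : MonotoneOn Φ' (Set.Ici 0))
    -- memory-based surrogate losses
    (L : ℕ → (Fin (m + 1) → EuclideanSpace ℝ (Fin d)) → ℝ)
    (hL : ∀ t z, L t z = f t z + Φ' (V (t - m - 1)) * max (g t z) 0)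
    -- feasible comparator
    (u : EuclideanSpace ℝ (Fin d))
    (hu : ∀ t ∈ Finset.Icc (m + 1) T, g t (fun _ => u) ≤ 0) :
    Φ (V T) - Φ (V m)
      + ∑ t ∈ Finset.Icc (m + 1) T,
          (f t (fun i => x (t - m + (i : ℕ))) - f t (fun _ => u))
    ≤ ∑ t ∈ Finset.Icc (m + 1) T,
          (L t (fun i => x (t - m + (i : ℕ))) - L t (fun _ => u))
        + G * (m + 1) * Φ' (V T) := by
  have hinc : ∀ t ∈ Icc (m + 1) T,
      V t - V (t - 1) = max (g t (fun i => x (t - m + (i : ℕ)))) 0 := fun t ht => by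
    rw [hVrec t (mem_Icc.1 ht).1 (mem_Icc.1 ht).2]; ring
  have hVstep : ∀ t, t + 1 ≤ T → V t ≤ V (t + 1) := fun t ht => by
    by_cases htm : t + 1 ≤ m
    · rw [hV0 t (by omega), hV0 (t + 1) htm]
    · have := hinc (t + 1) (mem_Icc.2 ⟨by omega, ht⟩)
      rw [Nat.add_sub_cancel] at this
      linarith [le_max_right (g (t + 1) (fun i => x (t + 1 - m + (i : ℕ)))) 0]
  have hVmono : MonotoneOn V (Set.Iic T) :=
    monotoneOn_of_le_succ Set.ordConnected_Iic fun t _ _ ht => hVstep t ht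
  have hVnonneg : ∀ t ∈ Set.Iic T, V t ∈ Set.Ici 0 := fun t ht =>
    hV0 0 m.zero_le ▸ hVmono (Set.mem_Iic.2 T.zero_le) ht t.zero_le
  have hLdiff : ∀ t ∈ Icc (m + 1) T,
      L t (fun i => x (t - m + (i : ℕ))) - L t (fun _ => u)
        = (f t (fun i => x (t - m + (i : ℕ))) - f t (fun _ => u))
          + Φ' (V (t - m - 1)) * (V t - V (t - 1)) := fun t ht => by
    rw [hL, hL, max_eq_right (hu t ht), hinc t ht]; ring
  have htele := sub_le_sum_deriv_mul_sub Set.ordConnected_Ici hΦderiv hΦ'mono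
    (by omega : m ≤ T) (hVmono.mono Set.Icc_subset_Iic_self)
    fun t ht => hVnonneg t (Set.Icc_subset_Iic_self ht)
  have hlag := sum_sub_lag_mul_le (k := m + 1) (p := fun t => V t - V (t - 1)) (by omega)
    (hΦ'mono.comp hVmono hVnonneg) (hΦ'nonneg _ (hVnonneg 0 (Set.mem_Iic.2 T.zero_le))) hG
    fun t ht => hinc t ht ▸ hgbd t _
  simp only [Function.comp, sub_mul, sum_sub_distrib, ← Nat.sub_sub] at hlag
  rw [sum_congr rfl hLdiff, sum_add_distrib]
  push_cast at hlag
  linarith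

/-- Regret decomposition with delayed penalty multiplier: for
any comparator `u` feasible for the memoryless constraints,
`Φ(V_T) − Φ(V_m) + Σ_{t=m+1}^T [f_t(x_{t−m},…,x_t) − f_t(u,…,u)]
  ≤ Σ_{t=m+1}^T [L_t(x_{t−m},…,x_t) − L_t(u,…,u)] + G·(m+1)·Φ′(V_T)`,
where `L_t(z) = f_t(z) + Φ′(V_{t−m−1})·g_t⁺(z)`. -/
theorem regret_decomposition_delayed_multiplier
    (d m T : ℕ) (hd : 0 < d) (hm : 0 < m) (hT : m + 1 ≤ T)
    -- arbitrary decisions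
    (x : ℕ → EuclideanSpace ℝ (Fin d))
    (f g : ℕ → (Fin (m + 1) → EuclideanSpace ℝ (Fin d)) → ℝ)
    (G : ℝ) (hG : 0 ≤ G)
    -- 0 ≤ g_t⁺ ≤ G pointwise
    (hgbd : ∀ t z, max (g t z) 0 ≤ G)
    -- convention: f_t = 0 and g_t = 0 outside {m+1,…,T}
    (hf0 : ∀ t, t ≤ m ∨ T < t → ∀ z, f t z = 0)
    (hg0 : ∀ t, t ≤ m ∨ T < t → ∀ z, g t z = 0)
    -- cumulative violation
    (V : ℕ → ℝ)
    (hV0 : ∀ t ≤ m, V t = 0)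
    (hVrec : ∀ t, m + 1 ≤ t → t ≤ T →
      V t = V (t - 1) + max (g t (fun i => x (t - m + (i : ℕ)))) 0)
    -- penalty function: convex, differentiable, Φ′ nonnegative and nondecreasing
    (Φ Φ' : ℝ → ℝ)
    (hΦconv : ConvexOn ℝ (Set.Ici 0) Φ)
    (hΦderiv : ∀ v ∈ Set.Ici (0:ℝ), HasDerivAt Φ (Φ' v) v)
    (hΦ'nonneg : ∀ v ∈ Set.Ici (0:ℝ), 0 ≤ Φ' v)
    (hΦ'mono : MonotoneOn Φ' (Set.Ici 0))
    (hΦnonneg : ∀ v ∈ Set.Ici (0:ℝ), 0 ≤ Φ v)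
    -- memory-based surrogate losses
    (L : ℕ → (Fin (m + 1) → EuclideanSpace ℝ (Fin d)) → ℝ)
    (hL : ∀ t z, L t z = f t z + Φ' (V (t - m - 1)) * max (g t z) 0)
    -- feasible comparator
    (u : EuclideanSpace ℝ (Fin d))
    (hu : ∀ t ∈ Finset.Icc (m + 1) T, g t (fun _ => u) ≤ 0) :
    Φ (V T) - Φ (V m)
      + ∑ t ∈ Finset.Icc (m + 1) T,
          (f t (fun i => x (t - m + (i : ℕ))) - f t (fun _ => u))
    ≤ ∑ t ∈ Finset.Icc (m + 1) T,
          (L t (fun i => x (t - m + (i : ℕ))) - L t (fun _ => u))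
        + G * (m + 1) * Φ' (V T) :=
  regret_decomposition_delayed_multiplier_general d m T hT x f g G hG hgbd V hV0 hVrec Φ Φ' hΦderiv
    hΦ'nonneg hΦ'mono L hL u hu
end

section
/- (Corollary on ODAFTRL with hints.) Suppose a real number R satisfies R ≤ (ρ/α + 1)·(2·max_{1≤t≤T} Σ_{j=t−m}^{t−1} a_j + √(Σ_{t=1}^{T} (a_t² + 2·α·b_t))). Then R ≤ (ρ/α + 1)·(2·m·D + √(D² + α))·√(Σ_{t=1}^{T} e_t²). -/
/-!
Each `a_t` and each `e_t` is at most `S := √(Σ_{t ≤ T} e_t²)` times `D`, resp. `1`, so a window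
of `m` consecutive `a_j` sums to at most `m D S`. Termwise, `a_t² ≤ D² e_t²` and
`huber(e_t, ‖γ_t‖) ≤ e_t² / 2`, so the square-root term is at most `√(D² + α) · S`.
-/

noncomputable def huber (x y : ℝ) : ℝ :=
  (1/2) * x ^ 2 - (1/2) * (max (|x| - |y|) 0) ^ 2

open Finset

lemma huber_le_half_sq (x y : ℝ) : huber x y ≤ x ^ 2 / 2 := by
  unfold huber
  nlinarith [sq_nonneg (max (|x| - |y|) 0)]

lemma sq_mul_min_add_huber_le {D α e g : ℝ} (hα : 0 ≤ α) (he : 0 ≤ e) (hg : 0 ≤ g) :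
    (D * min e g) ^ 2 + 2 * α * huber e g ≤ (D ^ 2 + α) * e ^ 2 := by
  have hmin : min e g ^ 2 ≤ e ^ 2 := pow_le_pow_left₀ (le_min he hg) (min_le_left e g) 2
  nlinarith [huber_le_half_sq e g, mul_le_mul_of_nonneg_left hmin (sq_nonneg D)]

lemma le_sqrt_sum_sq {ι : Type*} {s : Finset ι} {i : ι} (f : ι → ℝ) (hi : i ∈ s) :
    f i ≤ √(∑ j ∈ s, f j ^ 2) :=
  calc f i ≤ |f i| := le_abs_self _
    _ = √(f i ^ 2) := (Real.sqrt_sq_eq_abs _).symm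
    _ ≤ √(∑ j ∈ s, f j ^ 2) :=
      Real.sqrt_le_sqrt (single_le_sum (fun j _ => sq_nonneg (f j)) hi)

lemma sum_Icc_sub_le_of_le {a : ℤ → ℝ} {c : ℝ} {t : ℤ} (m : ℕ) (ha : ∀ j < t, a j ≤ c) :
    ∑ j ∈ Icc (t - m) (t - 1), a j ≤ m * c := by
  have hcard : #(Icc (t - m) (t - 1)) = m := by rw [Int.card_Icc]; omega
  calc ∑ j ∈ Icc (t - m) (t - 1), a j ≤ ∑ _j ∈ Icc (t - m) (t - 1), c :=
        sum_le_sum fun j hj => ha j (by have := (mem_Icc.mp hj).2; omega)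
    _ = m * c := by rw [sum_const, hcard, nsmul_eq_mul]

theorem odaftrl_hint_corollary_general
    (d T : ℕ) (m : ℕ)
    (D α ρ : ℝ) (hD : 0 ≤ D) (hα : 0 < α) (hρ : 0 ≤ ρ)
    -- revealed gradients and hints, indexed by ℤ
    (γ h : ℤ → EuclideanSpace ℝ (Fin d))
    (e a b : ℤ → ℝ)
    (he : ∀ t : ℤ, e t = ‖h t - ∑ τ ∈ Finset.Icc (t - (m : ℤ)) t, γ τ‖)
    (ha : ∀ t : ℤ, 1 ≤ t → a t = D * min (e t) ‖γ t‖)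
    (ha0 : ∀ t : ℤ, t ≤ 0 → a t = 0)
    (hb : ∀ t : ℤ, b t = huber (e t) ‖γ t‖)
    (hne : (Finset.Icc (1 : ℤ) (T : ℤ)).Nonempty)
    (R : ℝ)
    (hR : R ≤ (ρ / α + 1) *
        (2 * (Finset.Icc (1 : ℤ) (T : ℤ)).sup' hne
              (fun t => ∑ j ∈ Finset.Icc (t - (m : ℤ)) (t - 1), a j)
          + Real.sqrt (∑ t ∈ Finset.Icc (1 : ℤ) (T : ℤ),
              (a t ^ 2 + 2 * α * b t)))) :
    R ≤ (ρ / α + 1) * (2 * m * D + Real.sqrt (D ^ 2 + α))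
          * Real.sqrt (∑ t ∈ Finset.Icc (1 : ℤ) (T : ℤ), e t ^ 2) := by
  set S := √(∑ t ∈ Icc (1 : ℤ) T, e t ^ 2)
  have he_nonneg (t : ℤ) : 0 ≤ e t := he t ▸ norm_nonneg _
  have ha_le (j : ℤ) (hj : j ≤ T) : a j ≤ D * S := by
    rcases le_or_gt j 0 with hj0 | hj0
    · rw [ha0 j hj0]; positivity
    · rw [ha j hj0]
      exact mul_le_mul_of_nonneg_left
        ((min_le_left _ _).trans (le_sqrt_sum_sq e (mem_Icc.mpr ⟨hj0, hj⟩))) hD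
  have hwindow :
      (Icc (1 : ℤ) T).sup' hne (fun t => ∑ j ∈ Icc (t - m) (t - 1), a j) ≤ m * (D * S) :=
    sup'_le _ _ fun t ht => sum_Icc_sub_le_of_le m fun j hj =>
      ha_le j (by have := (mem_Icc.mp ht).2; omega)
  have hsqrt : √(∑ t ∈ Icc (1 : ℤ) T, (a t ^ 2 + 2 * α * b t)) ≤ √(D ^ 2 + α) * S := by
    rw [← Real.sqrt_mul (by positivity), mul_sum]
    gcongr with t ht
    rw [ha t (mem_Icc.mp ht).1, hb t]
    exact sq_mul_min_add_huber_le hα.le (he_nonneg t) (norm_nonneg _)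
  calc R ≤ (ρ / α + 1) * (2 * (m * (D * S)) + √(D ^ 2 + α) * S) := by
        refine hR.trans (mul_le_mul_of_nonneg_left ?_ (by positivity))
        linarith
    _ = (ρ / α + 1) * (2 * m * D + √(D ^ 2 + α)) * S := by ring

/-- Corollary on ODAFTRL with hints: if
`R ≤ (ρ/α + 1)·(2·max_{1≤t≤T} Σ_{j=t−m}^{t−1} a_j + √(Σ_{t=1}^T (a_t² + 2αb_t)))`
then `R ≤ (ρ/α + 1)·(2mD + √(D² + α))·√(Σ_{t=1}^T e_t²)`. -/
theorem odaftrl_hint_corollary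
    (d T : ℕ) (m : ℕ) (hd : 0 < d) (hT : 0 < T)
    (D α ρ : ℝ) (hD : 0 ≤ D) (hα : 0 < α) (hρ : 0 ≤ ρ)
    -- revealed gradients and hints, indexed by ℤ
    (γ h : ℤ → EuclideanSpace ℝ (Fin d))
    (hγ0 : ∀ t : ℤ, t ≤ 0 → γ t = 0)
    (e a b : ℤ → ℝ)
    (he : ∀ t : ℤ, e t = ‖h t - ∑ τ ∈ Finset.Icc (t - (m : ℤ)) t, γ τ‖)
    (ha : ∀ t : ℤ, 1 ≤ t → a t = D * min (e t) ‖γ t‖)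
    (ha0 : ∀ t : ℤ, t ≤ 0 → a t = 0)
    (hb : ∀ t : ℤ, b t = huber (e t) ‖γ t‖)
    (hne : (Finset.Icc (1 : ℤ) (T : ℤ)).Nonempty)
    (R : ℝ)
    (hR : R ≤ (ρ / α + 1) *
        (2 * (Finset.Icc (1 : ℤ) (T : ℤ)).sup' hne
              (fun t => ∑ j ∈ Finset.Icc (t - (m : ℤ)) (t - 1), a j)
          + Real.sqrt (∑ t ∈ Finset.Icc (1 : ℤ) (T : ℤ),
              (a t ^ 2 + 2 * α * b t)))) :
    R ≤ (ρ / α + 1) * (2 * m * D + Real.sqrt (D ^ 2 + α))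
          * Real.sqrt (∑ t ∈ Finset.Icc (1 : ℤ) (T : ℤ), e t ^ 2) :=
  odaftrl_hint_corollary_general d T m D α ρ hD hα hρ γ h e a b he ha ha0 hb hne R hR
end

section
/- (Quantitative core of the optimistic analysis.) Let F, T, C, E_f, E_g, G be nonnegative reals, let m be a nonnegative integer, suppose a := C·√E_g + G·(m+1) > 0, and set λ := 1/(2a) and Φ(v) := exp(λv) − 1 (so Φ′(v) = λ·exp(λv)). If real numbers R and V satisfy V ≥ 0, R ≥ −2·F·T, and Φ(V) + R ≤ C·√E_f + Φ′(V)·a, then R ≤ 1 + C·√E_f and V ≤ 2a·log(2·(1 + 2·F·T + C·√E_f)). -/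
/-! Since `λ·a = 1/2`, the term `Φ′(V)·a` is `exp(λV)/2`, so the hypothesis says
`exp(λV)/2 ≤ 1 + C·√E_f − R`. As `exp(λV) ≥ 1` this bounds `R`, and together with
`R ≥ −2FT` it bounds `exp(λV)`; taking logarithms bounds `V`. -/

open Real

lemma le_mul_log_of_exp_div_le {b V B : ℝ} (hb : 0 < b) (h : exp (V / b) ≤ B) :
    V ≤ b * log B := by
  have hB : 0 < B := (exp_pos _).trans_le h
  rw [← div_le_iff₀' hb]
  exact (le_log_iff_exp_le hB).mpr h

theorem optimistic_core_inequality_general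
    (F T C Ef : ℝ)
    (a : ℝ) (hapos : 0 < a)
    (lam : ℝ) (hlam : lam = 1 / (2 * a))
    (R V : ℝ) (hV : 0 ≤ V) (hR : R ≥ -(2 * F * T))
    (hmain : (Real.exp (lam * V) - 1) + R
        ≤ C * Real.sqrt Ef + (lam * Real.exp (lam * V)) * a) :
    R ≤ 1 + C * Real.sqrt Ef ∧
    V ≤ 2 * a * Real.log (2 * (1 + 2 * F * T + C * Real.sqrt Ef)) := by
  have hlamV : lam * V = V / (2 * a) := by rw [hlam]; ring
  have hlam_mul : lam * a = 1 / 2 := by rw [hlam]; field_simp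
  have hexp : exp (lam * V) / 2 ≤ 1 + C * √Ef - R := by
    rw [mul_right_comm, hlam_mul] at hmain
    linarith
  have hexp_one : 1 ≤ exp (lam * V) :=
    one_le_exp (mul_nonneg (by rw [hlam]; positivity) hV)
  refine ⟨by linarith, le_mul_log_of_exp_div_le (by positivity) ?_⟩
  rw [← hlamV]
  linarith

/-- Quantitative core of the optimistic analysis: with
`a = C·√E_g + G·(m+1) > 0`, `λ = 1/(2a)`, `Φ(v) = exp(λv) − 1`,
`Φ′(v) = λ·exp(λv)`, if `V ≥ 0`, `R ≥ −2FT` and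
`Φ(V) + R ≤ C·√E_f + Φ′(V)·a`, then `R ≤ 1 + C·√E_f` and
`V ≤ 2a·log(2·(1 + 2FT + C·√E_f))`. -/
theorem optimistic_core_inequality
    (F T C Ef Eg G : ℝ) (m : ℕ)
    (hF : 0 ≤ F) (hT : 0 ≤ T) (hC : 0 ≤ C) (hEf : 0 ≤ Ef) (hEg : 0 ≤ Eg)
    (hG : 0 ≤ G)
    (a : ℝ) (ha : a = C * Real.sqrt Eg + G * ((m : ℝ) + 1)) (hapos : 0 < a)
    (lam : ℝ) (hlam : lam = 1 / (2 * a))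
    (R V : ℝ) (hV : 0 ≤ V) (hR : R ≥ -(2 * F * T))
    (hmain : (Real.exp (lam * V) - 1) + R
        ≤ C * Real.sqrt Ef + (lam * Real.exp (lam * V)) * a) :
    R ≤ 1 + C * Real.sqrt Ef ∧
    V ≤ 2 * a * Real.log (2 * (1 + 2 * F * T + C * Real.sqrt Ef)) :=
  optimistic_core_inequality_general F T C Ef a hapos lam hlam R V hV hR hmain
end

section
/- (Optimistic COCO with memory, conditional on the forward regret guarantee.) Let u ∈ ℝ^d satisfy g_t^i(u) ≤ 0 for all t ∈ {m+1,…,T} and i ∈ {0,…,m}, let C, E_f, E_g ≥ 0 with a := C·√E_g + G·(m+1) > 0, and set λ := 1/(2a), so that the penalty is Φ(v) := exp(λv) − 1. If the forward regret satisfies Σ_{t=m+1}^{T} [Z_t(x_t) − Z_t(u)] ≤ C·(√E_f + Φ′(V_T)·√E_g), then Σ_{t=m+1}^{T} [f_t(x_{t−m},…,x_t) − f_t(u,…,u)] ≤ 1 + C·√E_f and V_T ≤ 2·(C·√E_g + G·(m+1))·log(2·(1 + 2·F·T + C·√E_f)). -/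
/-!
The potential `exp (λ V_t)` grows in round `s` by at most
`exp (λ (m+1) G) · Φ′(V_{s-m-1}) · g_s⁺`: this is convexity of `exp` together with the fact that
`V` moves by at most `(m+1) G` in `m+1` rounds. Reindexing the forward losses by the round
`s = t + i` at which a component is charged shows that the forward regret is the true regret plus
`Σ_s Φ′(V_{s-m-1}) Σ_i g_s^{i,+}(x_{s-i})`, and by separability this dominates the penalised
increments of `V`. Hence
`regret + exp (-λ (m+1) G) (exp (λ V_T) - 1) ≤ C √E_f + λ C √E_g exp (λ V_T)`, and since
`λ (m+1) G + λ C √E_g = 1/2` this gives `regret + exp (λ V_T) / 2 ≤ 1 + C √E_f`. Both bounds follow,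
the second because the regret is at least `-2 F T`.
-/

open Finset Real

theorem exp_sub_exp_le_exp_mul_sub (x y : ℝ) : exp x - exp y ≤ exp x * (x - y) := by
  have h := mul_le_mul_of_nonneg_left (add_one_le_exp (y - x)) (exp_pos x).le
  rw [← exp_add, add_sub_cancel] at h
  linarith

theorem exp_mul_sub_exp_mul_le {lam v w r D : ℝ} (hlam : 0 ≤ lam) (hvw : v ≤ w)
    (hw : w ≤ r + D) :
    exp (lam * w) - exp (lam * v) ≤ exp (lam * D) * (lam * exp (lam * r) * (w - v)) := by
  calc exp (lam * w) - exp (lam * v) ≤ exp (lam * w) * (lam * w - lam * v) :=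
        exp_sub_exp_le_exp_mul_sub _ _
    _ = exp (lam * w) * (lam * (w - v)) := by ring
    _ ≤ exp (lam * (r + D)) * (lam * (w - v)) := by gcongr
    _ = exp (lam * D) * (lam * exp (lam * r) * (w - v)) := by rw [mul_add, exp_add]; ring

theorem sum_Icc_sub_pred (φ : ℕ → ℝ) {a b : ℕ} (hab : a ≤ b) :
    ∑ s ∈ Icc (a + 1) b, (φ s - φ (s - 1)) = φ b - φ a := by
  induction b, hab using Nat.le_induction with
  | base => simp
  | succ b hab ih => rw [sum_Icc_succ_top (by omega), ih, Nat.add_sub_cancel]; ring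

theorem le_add_mul_of_sub_pred_le {V : ℕ → ℝ} {G : ℝ} {r s : ℕ} (hrs : r ≤ s)
    (h : ∀ k ∈ Icc (r + 1) s, V k - V (k - 1) ≤ G) : V s ≤ V r + (s - r : ℕ) * G := by
  have := sum_le_card_nsmul _ _ _ h
  rw [sum_Icc_sub_pred V hrs, Nat.card_Icc, nsmul_eq_mul, Nat.add_sub_add_right] at this
  linarith

theorem exp_mul_sub_exp_mul_le_sum_lagged {V : ℕ → ℝ} {lam D : ℝ} {a b n : ℕ} (hlam : 0 ≤ lam)
    (hab : a ≤ b) (hmono : ∀ s ∈ Icc (a + 1) b, V (s - 1) ≤ V s)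
    (hlag : ∀ s ∈ Icc (a + 1) b, V s ≤ V (s - n) + D) :
    exp (lam * V b) - exp (lam * V a)
      ≤ exp (lam * D) * ∑ s ∈ Icc (a + 1) b, lam * exp (lam * V (s - n)) * (V s - V (s - 1)) := by
  rw [← sum_Icc_sub_pred (fun s => exp (lam * V s)) hab, mul_sum]
  exact sum_le_sum fun s hs => exp_mul_sub_exp_mul_le hlam (hmono s hs) (hlag s hs)

theorem sum_Icc_add_eq_of_vanish {M : Type*} [AddCommMonoid M] (w : ℕ → M) (a b i : ℕ)
    (hlow : ∀ s < a + i, w s = 0) (hhigh : ∀ s, b < s → w s = 0) :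
    ∑ t ∈ Icc a b, w (t + i) = ∑ s ∈ Icc a b, w s := by
  rw [← sum_image (g := (· + i)) fun _ _ _ _ => Nat.add_right_cancel, image_add_right_Icc]
  calc ∑ s ∈ Icc (a + i) (b + i), w s = ∑ s ∈ Icc a (b + i), w s :=
        sum_subset (Icc_subset_Icc_left (by omega)) fun s hs hs' => hlow s (by
          simp only [mem_Icc] at hs hs'; omega)
    _ = ∑ s ∈ Icc a b, w s :=
        (sum_subset (Icc_subset_Icc_right (by omega)) fun s hs hs' => hhigh s (by
          simp only [mem_Icc] at hs hs'; omega)).symm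

theorem sum_Icc_sum_range_add_eq_of_vanish {M : Type*} [AddCommMonoid M] (W : ℕ → ℕ → M)
    (a b n : ℕ) (hW : ∀ s i, s < a + i ∨ b < s → W s i = 0) :
    ∑ t ∈ Icc a b, ∑ i ∈ range n, W (t + i) i = ∑ s ∈ Icc a b, ∑ i ∈ range n, W s i := by
  rw [sum_comm, sum_comm (s := Icc a b)]
  exact sum_congr rfl fun i _ => sum_Icc_add_eq_of_vanish (W · i) a b i
    (fun s hs => hW s i (Or.inl hs)) (fun s hs => hW s i (Or.inr hs))

theorem sum_range_window_eq {E : Type*} (x : ℕ → E) (c : ℕ → E → ℝ) {m s : ℕ} (hs : m ≤ s) :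
    ∑ i ∈ range (m + 1),
        c i ((fun j : Fin (m + 1) => x (s - m + j)) ⟨m - i, Nat.lt_succ_of_le (Nat.sub_le m i)⟩)
      = ∑ i ∈ range (m + 1), c i (x (s - i)) :=
  sum_congr rfl fun i hi => by
    rw [mem_range] at hi
    simp only [show s - m + (m - i) = s - i by omega]

theorem neg_mul_le_sum_Icc_sub {F : ℝ} (hF : 0 ≤ F) (p q : ℕ → ℝ) (hp : ∀ t, |p t| ≤ F)
    (hq : ∀ t, |q t| ≤ F) (m T : ℕ) : -(2 * F * T) ≤ ∑ t ∈ Icc (m + 1) T, (p t - q t) := by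
  have hterm : ∀ t ∈ Icc (m + 1) T, -(2 * F) ≤ p t - q t := fun t _ => by
    linarith [(abs_le.mp (hp t)).1, (abs_le.mp (hq t)).2]
  have hcard : ((#(Icc (m + 1) T) : ℕ) : ℝ) ≤ T := by
    rw [Nat.card_Icc]; exact_mod_cast (by omega : T + 1 - (m + 1) ≤ T)
  have := card_nsmul_le_sum _ _ _ hterm
  rw [nsmul_eq_mul] at this
  nlinarith

theorem violation_step_bounds {V δ : ℕ → ℝ} {m T : ℕ} {G : ℝ} (hG : 0 ≤ G)
    (hV0 : ∀ t ≤ m, V t = 0) (hVrec : ∀ t, m + 1 ≤ t → t ≤ T → V t = V (t - 1) + δ t)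
    (hδ : ∀ t, 0 ≤ δ t ∧ δ t ≤ G) (k : ℕ) (hk : k ≤ T) :
    V (k - 1) ≤ V k ∧ V k - V (k - 1) ≤ G := by
  rcases le_or_gt k m with hkm | hkm
  · rw [hV0 k hkm, hV0 (k - 1) (by omega)]
    exact ⟨le_rfl, by simpa using hG⟩
  · rw [hVrec k hkm hk]
    constructor <;> linarith [hδ k]

theorem violation_nonneg {V δ : ℕ → ℝ} {m T : ℕ} {G : ℝ} (hG : 0 ≤ G) (hT : m ≤ T)
    (hV0 : ∀ t ≤ m, V t = 0) (hVrec : ∀ t, m + 1 ≤ t → t ≤ T → V t = V (t - 1) + δ t)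
    (hδ : ∀ t, 0 ≤ δ t ∧ δ t ≤ G) : 0 ≤ V T := by
  have := sum_nonneg fun s (hs : s ∈ Icc (m + 1) T) =>
    sub_nonneg.mpr (violation_step_bounds hG hV0 hVrec hδ s (mem_Icc.mp hs).2).1
  rwa [sum_Icc_sub_pred V hT, hV0 m le_rfl, sub_zero] at this

theorem exp_mul_violation_sub_one_le {V δ M : ℕ → ℝ} {m T : ℕ} {G lam : ℝ} (hG : 0 ≤ G)
    (hlam : 0 ≤ lam) (hT : m ≤ T) (hV0 : ∀ t ≤ m, V t = 0)
    (hVrec : ∀ t, m + 1 ≤ t → t ≤ T → V t = V (t - 1) + δ t) (hδ : ∀ t, 0 ≤ δ t ∧ δ t ≤ G)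
    (hδM : ∀ s ∈ Icc (m + 1) T, δ s ≤ M s) :
    exp (lam * V T) - 1 ≤ exp (lam * (((m : ℝ) + 1) * G))
      * ∑ s ∈ Icc (m + 1) T, lam * exp (lam * V (s - (m + 1))) * M s := by
  have hstep := violation_step_bounds hG hV0 hVrec hδ
  have hlag : ∀ s ∈ Icc (m + 1) T, V s ≤ V (s - (m + 1)) + ((m : ℝ) + 1) * G := fun s hs => by
    rw [mem_Icc] at hs
    have := le_add_mul_of_sub_pred_le (V := V) (G := G) (Nat.sub_le s (m + 1))
      fun k hk => (hstep k (by rw [mem_Icc] at hk; omega)).2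
    rwa [Nat.sub_sub_self hs.1, Nat.cast_succ] at this
  calc exp (lam * V T) - 1 = exp (lam * V T) - exp (lam * V m) := by simp [hV0 m le_rfl]
    _ ≤ _ := exp_mul_sub_exp_mul_le_sum_lagged hlam hT
        (fun s hs => (hstep s (mem_Icc.mp hs).2).1) hlag
    _ ≤ _ := by
      gcongr with s hs
      rw [mem_Icc] at hs
      rw [hVrec s hs.1 hs.2, add_sub_cancel_left]
      exact hδM s (mem_Icc.mpr hs)

theorem add_half_le_of_potential_le {R S φ c μ E : ℝ} (hc : 0 ≤ c) (hcμ : c + μ = 1 / 2)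
    (hφ : 1 ≤ φ) (hpot : φ - 1 ≤ exp c * S) (hreg : R + S ≤ E + μ * φ) : R + φ / 2 ≤ 1 + E := by
  have hS : exp (-c) * (φ - 1) ≤ S := by
    rw [exp_neg, inv_mul_le_iff₀ (exp_pos c)]; exact hpot
  have hexp : 1 - c ≤ exp (-c) := by linarith [add_one_le_exp (-c)]
  nlinarith [mul_le_mul_of_nonneg_right hexp (sub_nonneg.mpr hφ)]

theorem sum_forward_regret_eq {E : Type*} {m T : ℕ} (x : ℕ → E) (u : E)
    (f : ℕ → (Fin (m + 1) → E) → ℝ) (fi gi : ℕ → ℕ → E → ℝ) (P : ℕ → ℝ) (Z : ℕ → E → ℝ)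
    (hsepf : ∀ t, ∀ z : Fin (m + 1) → E,
      f t z = ∑ i ∈ range (m + 1), fi t i (z ⟨m - i, Nat.lt_succ_of_le (Nat.sub_le m i)⟩))
    (hfi0 : ∀ t i, t < m + 1 + i ∨ T < t → ∀ y, fi t i y = 0)
    (hgi0 : ∀ t i, t < m + 1 + i ∨ T < t → ∀ y, gi t i y = 0)
    (hu : ∀ t ∈ Icc (m + 1) T, ∀ i ∈ range (m + 1), gi t i u ≤ 0)
    (hZ : ∀ t ∈ Icc (m + 1) T, ∀ y, Z t y = ∑ i ∈ range (m + 1),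
      (fi (t + i) i y + P (t + i) * max (gi (t + i) i y) 0)) :
    ∑ t ∈ Icc (m + 1) T, (Z t (x t) - Z t u)
      = ∑ t ∈ Icc (m + 1) T, (f t (fun i => x (t - m + (i : ℕ))) - f t (fun _ => u))
        + ∑ s ∈ Icc (m + 1) T, P s * ∑ i ∈ range (m + 1), max (gi s i (x (s - i))) 0 := by
  set W : ℕ → ℕ → ℝ := fun s i =>
    fi s i (x (s - i)) + P s * max (gi s i (x (s - i))) 0 - (fi s i u + P s * max (gi s i u) 0)
  have hW0 : ∀ s i, s < m + 1 + i ∨ T < s → W s i = 0 := fun s i h => by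
    simp [W, hfi0 s i h, hgi0 s i h]
  calc ∑ t ∈ Icc (m + 1) T, (Z t (x t) - Z t u)
      = ∑ t ∈ Icc (m + 1) T, ∑ i ∈ range (m + 1), W (t + i) i := sum_congr rfl fun t ht => by
        simp only [hZ t ht, W, Nat.add_sub_cancel, ← sum_sub_distrib]
    _ = ∑ s ∈ Icc (m + 1) T, ∑ i ∈ range (m + 1), W s i :=
        sum_Icc_sum_range_add_eq_of_vanish W _ _ _ hW0
    _ = _ := by
      rw [← sum_add_distrib]
      refine sum_congr rfl fun s hs => ?_
      have hms : m ≤ s := by rw [mem_Icc] at hs; omega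
      have hgu : ∀ i ∈ range (m + 1), max (gi s i u) 0 = 0 := fun i hi =>
        max_eq_right (hu s hs i hi)
      rw [hsepf, hsepf, sum_range_window_eq x (fi s) hms, mul_sum, ← sum_sub_distrib,
        ← sum_add_distrib]
      refine sum_congr rfl fun i hi => ?_
      simp only [W, hgu i hi]
      ring

theorem optimistic_coco_memory_general
    (d m T : ℕ) (hT : m + 1 ≤ T)
    -- arbitrary decisions
    (x : ℕ → EuclideanSpace ℝ (Fin d))
    (f g : ℕ → (Fin (m + 1) → EuclideanSpace ℝ (Fin d)) → ℝ)
    (F G : ℝ) (hF : 0 ≤ F) (hG : 0 ≤ G)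
    -- |f_t| ≤ F and 0 ≤ g_t⁺ ≤ G pointwise
    (hfbd : ∀ t z, |f t z| ≤ F)
    (hgbd : ∀ t z, max (g t z) 0 ≤ G)
    -- cumulative violation
    (V : ℕ → ℝ)
    (hV0 : ∀ t ≤ m, V t = 0)
    (hVrec : ∀ t, m + 1 ≤ t → t ≤ T →
      V t = V (t - 1) + max (g t (fun i => x (t - m + (i : ℕ)))) 0)
    -- separable components: the i-th component acts on the decision made
    -- i rounds before t (coordinate m−i of the tuple)
    (fi gi : ℕ → ℕ → EuclideanSpace ℝ (Fin d) → ℝ)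
    (hsepf : ∀ t, ∀ z : Fin (m + 1) → EuclideanSpace ℝ (Fin d),
      f t z = ∑ i ∈ Finset.range (m + 1),
        fi t i (z ⟨m - i, Nat.lt_succ_of_le (Nat.sub_le m i)⟩))
    (hsepg : ∀ t, ∀ z : Fin (m + 1) → EuclideanSpace ℝ (Fin d),
      g t z = ∑ i ∈ Finset.range (m + 1),
        gi t i (z ⟨m - i, Nat.lt_succ_of_le (Nat.sub_le m i)⟩))
    -- convention: components vanish when t ≤ m, t > T, or t − i ≤ m
    (hfi0 : ∀ t i, t ≤ m ∨ T < t ∨ t - i ≤ m → ∀ y, fi t i y = 0)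
    (hgi0 : ∀ t i, t ≤ m ∨ T < t ∨ t - i ≤ m → ∀ y, gi t i y = 0)
    -- prediction-error quantities and the penalty parameter
    (C Ef Eg : ℝ)
    (a : ℝ) (ha : a = C * Real.sqrt Eg + G * ((m : ℝ) + 1)) (hapos : 0 < a)
    (lam : ℝ) (hlam : lam = 1 / (2 * a))
    -- forward losses with penalty Φ(v) = exp(λv) − 1, Φ′(v) = λ·exp(λv)
    (Z : ℕ → EuclideanSpace ℝ (Fin d) → ℝ)
    (hZ : ∀ t y, Z t y = ∑ i ∈ Finset.range (m + 1),
      (fi (t + i) i y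
        + (lam * Real.exp (lam * V (t - m - 1 + i))) * max (gi (t + i) i y) 0))
    -- feasible comparator
    (u : EuclideanSpace ℝ (Fin d))
    (hu : ∀ t ∈ Finset.Icc (m + 1) T, ∀ i ∈ Finset.range (m + 1), gi t i u ≤ 0)
    -- forward regret guarantee
    (hforward : ∑ t ∈ Finset.Icc (m + 1) T, (Z t (x t) - Z t u)
      ≤ C * (Real.sqrt Ef
          + (lam * Real.exp (lam * V T)) * Real.sqrt Eg)) :
    (∑ t ∈ Finset.Icc (m + 1) T,
        (f t (fun i => x (t - m + (i : ℕ))) - f t (fun _ => u))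
      ≤ 1 + C * Real.sqrt Ef) ∧
    V T ≤ 2 * (C * Real.sqrt Eg + G * ((m : ℝ) + 1))
        * Real.log (2 * (1 + 2 * F * T + C * Real.sqrt Ef)) := by
  have hlam_pos : 0 < lam := by rw [hlam]; positivity
  have hδ : ∀ t, 0 ≤ max (g t (fun i => x (t - m + (i : ℕ)))) 0
      ∧ max (g t (fun i => x (t - m + (i : ℕ)))) 0 ≤ G := fun t => ⟨le_max_right _ _, hgbd t _⟩
  have hVT := violation_nonneg hG (by omega) hV0 hVrec hδ
  have hpot := exp_mul_violation_sub_one_le (lam := lam)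
    (M := fun s => ∑ i ∈ range (m + 1), max (gi s i (x (s - i))) 0) hG hlam_pos.le (by omega)
    hV0 hVrec hδ fun s hs => by
      rw [hsepg, sum_range_window_eq x (gi s) (by rw [mem_Icc] at hs; omega)]
      exact max_le (sum_le_sum fun i _ => le_max_left _ _) (sum_nonneg fun i _ => le_max_right _ _)
  have hreg := sum_forward_regret_eq x u f fi gi (fun s => lam * exp (lam * V (s - (m + 1)))) Z
    hsepf (fun t i h => hfi0 t i (by omega)) (fun t i h => hgi0 t i (by omega)) hu
    fun t ht y => by
      rw [hZ]
      refine sum_congr rfl fun i _ => ?_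
      rw [show t - m - 1 + i = t + i - (m + 1) by rw [mem_Icc] at ht; omega]
  have hcμ : lam * (((m : ℝ) + 1) * G) + lam * (C * √Eg) = 1 / 2 := by
    rw [hlam, ha] at *; field_simp; ring
  have hmain := add_half_le_of_potential_le (E := C * √Ef) (by positivity) hcμ
    (one_le_exp (by positivity)) hpot ((hreg ▸ hforward).trans_eq (by ring))
  have hR := neg_mul_le_sum_Icc_sub hF _ _ (fun t => hfbd t (fun i => x (t - m + (i : ℕ))))
    (fun t => hfbd t fun _ => u) m T
  refine ⟨by linarith [exp_pos (lam * V T)], ?_⟩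
  have hlog : lam * V T ≤ log (2 * (1 + 2 * F * T + C * √Ef)) := by
    rw [le_log_iff_exp_le (by linarith [one_le_exp (by positivity : 0 ≤ lam * V T)])]
    linarith
  calc V T = 2 * a * (lam * V T) := by rw [hlam]; field_simp
    _ ≤ _ := by rw [← ha]; gcongr

/-- Optimistic COCO with memory, conditional on the forward
regret guarantee: with penalty `Φ(v) = exp(λv) − 1`, `λ = 1/(2a)`,
`a = C·√E_g + G·(m+1) > 0`, if the forward regret satisfies
`Σ [Z_t(x_t) − Z_t(u)] ≤ C·(√E_f + Φ′(V_T)·√E_g)` for a comparator `u` feasible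
for all constraint components, then the regret is at most `1 + C·√E_f` and
`V_T ≤ 2·(C·√E_g + G·(m+1))·log(2·(1 + 2·F·T + C·√E_f))`. -/
theorem optimistic_coco_memory
    (d m T : ℕ) (hd : 0 < d) (hm : 0 < m) (hT : m + 1 ≤ T)
    -- arbitrary decisions
    (x : ℕ → EuclideanSpace ℝ (Fin d))
    (f g : ℕ → (Fin (m + 1) → EuclideanSpace ℝ (Fin d)) → ℝ)
    (F G : ℝ) (hF : 0 ≤ F) (hG : 0 ≤ G)
    -- |f_t| ≤ F and 0 ≤ g_t⁺ ≤ G pointwise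
    (hfbd : ∀ t z, |f t z| ≤ F)
    (hgbd : ∀ t z, max (g t z) 0 ≤ G)
    -- convention: f_t = 0 and g_t = 0 outside {m+1,…,T}
    (hf0 : ∀ t, t ≤ m ∨ T < t → ∀ z, f t z = 0)
    (hg0 : ∀ t, t ≤ m ∨ T < t → ∀ z, g t z = 0)
    -- cumulative violation
    (V : ℕ → ℝ)
    (hV0 : ∀ t ≤ m, V t = 0)
    (hVrec : ∀ t, m + 1 ≤ t → t ≤ T →
      V t = V (t - 1) + max (g t (fun i => x (t - m + (i : ℕ)))) 0)
    -- separable components: the i-th component acts on the decision made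
    -- i rounds before t (coordinate m−i of the tuple)
    (fi gi : ℕ → ℕ → EuclideanSpace ℝ (Fin d) → ℝ)
    (hsepf : ∀ t, ∀ z : Fin (m + 1) → EuclideanSpace ℝ (Fin d),
      f t z = ∑ i ∈ Finset.range (m + 1),
        fi t i (z ⟨m - i, Nat.lt_succ_of_le (Nat.sub_le m i)⟩))
    (hsepg : ∀ t, ∀ z : Fin (m + 1) → EuclideanSpace ℝ (Fin d),
      g t z = ∑ i ∈ Finset.range (m + 1),
        gi t i (z ⟨m - i, Nat.lt_succ_of_le (Nat.sub_le m i)⟩))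
    -- convention: components vanish when t ≤ m, t > T, or t − i ≤ m
    (hfi0 : ∀ t i, t ≤ m ∨ T < t ∨ t - i ≤ m → ∀ y, fi t i y = 0)
    (hgi0 : ∀ t i, t ≤ m ∨ T < t ∨ t - i ≤ m → ∀ y, gi t i y = 0)
    -- prediction-error quantities and the penalty parameter
    (C Ef Eg : ℝ) (hC : 0 ≤ C) (hEf : 0 ≤ Ef) (hEg : 0 ≤ Eg)
    (a : ℝ) (ha : a = C * Real.sqrt Eg + G * ((m : ℝ) + 1)) (hapos : 0 < a)
    (lam : ℝ) (hlam : lam = 1 / (2 * a))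
    -- forward losses with penalty Φ(v) = exp(λv) − 1, Φ′(v) = λ·exp(λv)
    (Z : ℕ → EuclideanSpace ℝ (Fin d) → ℝ)
    (hZ : ∀ t y, Z t y = ∑ i ∈ Finset.range (m + 1),
      (fi (t + i) i y
        + (lam * Real.exp (lam * V (t - m - 1 + i))) * max (gi (t + i) i y) 0))
    -- feasible comparator
    (u : EuclideanSpace ℝ (Fin d))
    (hu : ∀ t ∈ Finset.Icc (m + 1) T, ∀ i ∈ Finset.range (m + 1), gi t i u ≤ 0)
    -- forward regret guarantee
    (hforward : ∑ t ∈ Finset.Icc (m + 1) T, (Z t (x t) - Z t u)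
      ≤ C * (Real.sqrt Ef
          + (lam * Real.exp (lam * V T)) * Real.sqrt Eg)) :
    (∑ t ∈ Finset.Icc (m + 1) T,
        (f t (fun i => x (t - m + (i : ℕ))) - f t (fun _ => u))
      ≤ 1 + C * Real.sqrt Ef) ∧
    V T ≤ 2 * (C * Real.sqrt Eg + G * ((m : ℝ) + 1))
        * Real.log (2 * (1 + 2 * F * T + C * Real.sqrt Ef)) :=
  optimistic_coco_memory_general d m T hT x f g F G hF hG hfbd hgbd V hV0 hVrec fi gi hsepf hsepg
    hfi0 hgi0 C Ef Eg a ha hapos lam hlam Z hZ u hu hforward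
end

section
/- Regret decomposition for memory-dependent losses with memoryless constraints: for every u ∈ ℝ^d with g_t(u) ≤ 0 for all t ∈ {m+1,…,T}, one has Φ(V_T) − Φ(V_m) + Σ_{t=m+1}^{T} [f_t(x_{t−m},…,x_t) − f_t(u,…,u)] ≤ Σ_{t=m+1}^{T} [ℒ_t − ℒ_t(u)] + G·Φ′(V_T), where ℒ_t := f_t(x_{t−m},…,x_t) + Φ′(V_{t−1})·g_t⁺(x_t) and ℒ_t(u) := f_t(u,…,u) + Φ′(V_{t−1})·g_t⁺(u). -/
/-!
Since `g_t(u) ≤ 0`, the comparator's penalty terms vanish and it remains to bound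
`Φ(V_T) − Φ(V_m)` by `Σ_t Φ′(V_{t−1}) g_t⁺(x_t) + G Φ′(V_T)`. Convexity places the slope of `Φ`
between `V_{t−1}` and `V_t` between `Φ′(V_{t−1})` and `Φ′(V_t)`, so with `V_t − V_{t−1} = g_t⁺(x_t) ≤ G`,
`Φ(V_t) − Φ(V_{t−1}) ≤ Φ′(V_{t−1}) g_t⁺(x_t) + G (Φ′(V_t) − Φ′(V_{t−1}))`.
The last term telescopes to `G (Φ′(V_T) − Φ′(V_m)) ≤ G Φ′(V_T)`.
-/

open Finset

theorem ConvexOn.sub_le_deriv_mul_add_mul_sub_deriv {S : Set ℝ} {f : ℝ → ℝ} {a b f'a f'b G : ℝ}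
    (hf : ConvexOn ℝ S f) (ha : a ∈ S) (hb : b ∈ S) (hab : a ≤ b) (hbaG : b - a ≤ G)
    (hfa : HasDerivAt f f'a a) (hfb : HasDerivAt f f'b b) :
    f b - f a ≤ f'a * (b - a) + G * (f'b - f'a) := by
  rcases hab.eq_or_lt with rfl | hlt
  · simp [hfa.unique hfb]
  have hslope_eq : f b - f a = slope f a b * (b - a) := by
    rw [slope_def_field, div_mul_cancel₀ _ (sub_pos.2 hlt).ne']
  have hlow : f'a ≤ slope f a b := hf.le_slope_of_hasDerivAt ha hb hlt hfa
  have hup : slope f a b ≤ f'b := hf.slope_le_of_hasDerivAt ha hb hlt hfb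
  have hba : 0 ≤ b - a := sub_nonneg.2 hab
  calc f b - f a = slope f a b * (b - a) := hslope_eq
    _ ≤ f'b * (b - a) := mul_le_mul_of_nonneg_right hup hba
    _ = f'a * (b - a) + (f'b - f'a) * (b - a) := by ring
    _ ≤ f'a * (b - a) + G * (f'b - f'a) := by
      have := mul_le_mul_of_nonneg_left hbaG (sub_nonneg.2 (hlow.trans hup))
      linarith

theorem Finset.sub_le_sum_Icc_of_sub_le {α : Type*} [AddCommGroup α] [PartialOrder α]
    [IsOrderedAddMonoid α] {F c : ℕ → α} {m T : ℕ} (hmT : m ≤ T)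
    (h : ∀ t ∈ Icc (m + 1) T, F t - F (t - 1) ≤ c t) :
    F T - F m ≤ ∑ t ∈ Icc (m + 1) T, c t := by
  induction T, hmT using Nat.le_induction with
  | base => simp
  | succ n hmn ih =>
    have hstep := h (n + 1) (mem_Icc.2 ⟨by omega, le_rfl⟩)
    have ih' := ih fun t ht => h t (by simp only [mem_Icc] at ht ⊢; omega)
    rw [sum_Icc_succ_top (by omega)]
    simp only [Nat.add_sub_cancel] at hstep
    calc F (n + 1) - F m = (F n - F m) + (F (n + 1) - F n) := by abel
      _ ≤ _ := add_le_add ih' hstep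

theorem nonneg_of_eq_add_nonneg {α : Type*} [AddCommMonoid α] [PartialOrder α]
    [IsOrderedAddMonoid α] {V a : ℕ → α} {m T n : ℕ} (hVm : 0 ≤ V m)
    (ha : ∀ t ∈ Icc (m + 1) T, 0 ≤ a t)
    (hrec : ∀ t, m + 1 ≤ t → t ≤ T → V t = V (t - 1) + a t)
    (hmn : m ≤ n) (hnT : n ≤ T) : 0 ≤ V n := by
  induction n, hmn using Nat.le_induction with
  | base => exact hVm
  | succ n hmn ih =>
    rw [hrec (n + 1) (by omega) hnT, Nat.add_sub_cancel]
    exact add_nonneg (ih (by omega)) (ha (n + 1) (mem_Icc.2 ⟨by omega, hnT⟩))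

theorem ConvexOn.sub_sub_le_sum_deriv_mul_increment {Φ Φ' : ℝ → ℝ} {V a : ℕ → ℝ} {G : ℝ} {m T : ℕ}
    (hΦ : ConvexOn ℝ (Set.Ici 0) Φ) (hΦ' : ∀ v ∈ Set.Ici (0 : ℝ), HasDerivAt Φ (Φ' v) v)
    (hmT : m ≤ T) (hVm : 0 ≤ V m) (ha : ∀ t ∈ Icc (m + 1) T, 0 ≤ a t ∧ a t ≤ G)
    (hrec : ∀ t, m + 1 ≤ t → t ≤ T → V t = V (t - 1) + a t) :
    Φ (V T) - G * Φ' (V T) - (Φ (V m) - G * Φ' (V m)) ≤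
      ∑ t ∈ Icc (m + 1) T, Φ' (V (t - 1)) * a t := by
  have hV : ∀ n, m ≤ n → n ≤ T → 0 ≤ V n := fun n hmn hnT =>
    nonneg_of_eq_add_nonneg hVm (fun t ht => (ha t ht).1) hrec hmn hnT
  refine sub_le_sum_Icc_of_sub_le (F := fun t => Φ (V t) - G * Φ' (V t)) hmT fun t ht => ?_
  obtain ⟨hmt, htT⟩ := mem_Icc.1 ht
  have hprev : 0 ≤ V (t - 1) := hV _ (by omega) (by omega)
  have hcur : 0 ≤ V t := hV t (by omega) htT
  have hinc : V t - V (t - 1) = a t := by rw [hrec t hmt htT]; ring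
  have hstep := hΦ.sub_le_deriv_mul_add_mul_sub_deriv hprev hcur
    (by linarith [(ha t ht).1]) (hinc ▸ (ha t ht).2) (hΦ' _ hprev) (hΦ' _ hcur)
  rw [hinc] at hstep
  linarith

theorem regret_decomposition_memoryless_constraints_general
    (d m T : ℕ) (hT : m + 1 ≤ T)
    -- arbitrary decisions
    (x : ℕ → EuclideanSpace ℝ (Fin d))
    (f : ℕ → (Fin (m + 1) → EuclideanSpace ℝ (Fin d)) → ℝ)
    (g : ℕ → EuclideanSpace ℝ (Fin d) → ℝ)
    (G : ℝ) (hG : 0 ≤ G)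
    -- 0 ≤ g_t⁺ ≤ G pointwise
    (hgbd : ∀ t ∈ Finset.Icc (m + 1) T, ∀ y, max (g t y) 0 ≤ G)
    -- cumulative violation
    (V : ℕ → ℝ)
    (hVm : V m = 0)
    (hVrec : ∀ t, m + 1 ≤ t → t ≤ T → V t = V (t - 1) + max (g t (x t)) 0)
    -- penalty function: convex, differentiable, Φ′ nonnegative and nondecreasing
    (Φ Φ' : ℝ → ℝ)
    (hΦconv : ConvexOn ℝ (Set.Ici 0) Φ)
    (hΦderiv : ∀ v ∈ Set.Ici (0:ℝ), HasDerivAt Φ (Φ' v) v)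
    (hΦ'nonneg : ∀ v ∈ Set.Ici (0:ℝ), 0 ≤ Φ' v)
    -- feasible comparator
    (u : EuclideanSpace ℝ (Fin d))
    (hu : ∀ t ∈ Finset.Icc (m + 1) T, g t u ≤ 0) :
    Φ (V T) - Φ (V m)
      + ∑ t ∈ Finset.Icc (m + 1) T,
          (f t (fun i => x (t - m + (i : ℕ))) - f t (fun _ => u))
    ≤ ∑ t ∈ Finset.Icc (m + 1) T,
          ((f t (fun i => x (t - m + (i : ℕ))) + Φ' (V (t - 1)) * max (g t (x t)) 0)
            - (f t (fun _ => u) + Φ' (V (t - 1)) * max (g t u) 0))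
        + G * Φ' (V T) := by
  have hpotential := hΦconv.sub_sub_le_sum_deriv_mul_increment hΦderiv (by omega) hVm.ge
    (fun t ht => ⟨le_max_right _ _, hgbd t ht (x t)⟩) hVrec
  have hregret : ∀ t ∈ Icc (m + 1) T,
      (f t (fun i => x (t - m + (i : ℕ))) + Φ' (V (t - 1)) * max (g t (x t)) 0)
          - (f t (fun _ => u) + Φ' (V (t - 1)) * max (g t u) 0)
        = (f t (fun i => x (t - m + (i : ℕ))) - f t (fun _ => u))
          + Φ' (V (t - 1)) * max (g t (x t)) 0 := fun t ht => by
    rw [max_eq_right (hu t ht)]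
    ring
  rw [sum_congr rfl hregret, sum_add_distrib]
  have hGΦ'Vm : 0 ≤ G * Φ' (V m) := mul_nonneg hG (hΦ'nonneg _ (hVm ▸ Set.self_mem_Ici))
  linarith

/-- Regret decomposition for memory-dependent losses with
memoryless constraints: for every comparator `u` with `g_t(u) ≤ 0` for all
`t ∈ {m+1,…,T}`,
`Φ(V_T) − Φ(V_m) + Σ_{t=m+1}^T [f_t(x_{t−m},…,x_t) − f_t(u,…,u)]
  ≤ Σ_{t=m+1}^T [ℒ_t − ℒ_t(u)] + G·Φ′(V_T)`, where
`ℒ_t = f_t(x_{t−m},…,x_t) + Φ′(V_{t−1})·g_t⁺(x_t)` and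
`ℒ_t(u) = f_t(u,…,u) + Φ′(V_{t−1})·g_t⁺(u)`. -/
theorem regret_decomposition_memoryless_constraints
    (d m T : ℕ) (hd : 0 < d) (hm : 0 < m) (hT : m + 1 ≤ T)
    -- arbitrary decisions
    (x : ℕ → EuclideanSpace ℝ (Fin d))
    (f : ℕ → (Fin (m + 1) → EuclideanSpace ℝ (Fin d)) → ℝ)
    (g : ℕ → EuclideanSpace ℝ (Fin d) → ℝ)
    (G : ℝ) (hG : 0 ≤ G)
    -- 0 ≤ g_t⁺ ≤ G pointwise
    (hgbd : ∀ t ∈ Finset.Icc (m + 1) T, ∀ y, max (g t y) 0 ≤ G)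
    -- cumulative violation
    (V : ℕ → ℝ)
    (hVm : V m = 0)
    (hVrec : ∀ t, m + 1 ≤ t → t ≤ T → V t = V (t - 1) + max (g t (x t)) 0)
    -- penalty function: convex, differentiable, Φ′ nonnegative and nondecreasing
    (Φ Φ' : ℝ → ℝ)
    (hΦconv : ConvexOn ℝ (Set.Ici 0) Φ)
    (hΦderiv : ∀ v ∈ Set.Ici (0:ℝ), HasDerivAt Φ (Φ' v) v)
    (hΦ'nonneg : ∀ v ∈ Set.Ici (0:ℝ), 0 ≤ Φ' v)
    (hΦ'mono : MonotoneOn Φ' (Set.Ici 0))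
    (hΦnonneg : ∀ v ∈ Set.Ici (0:ℝ), 0 ≤ Φ v)
    -- feasible comparator
    (u : EuclideanSpace ℝ (Fin d))
    (hu : ∀ t ∈ Finset.Icc (m + 1) T, g t u ≤ 0) :
    Φ (V T) - Φ (V m)
      + ∑ t ∈ Finset.Icc (m + 1) T,
          (f t (fun i => x (t - m + (i : ℕ))) - f t (fun _ => u))
    ≤ ∑ t ∈ Finset.Icc (m + 1) T,
          ((f t (fun i => x (t - m + (i : ℕ))) + Φ' (V (t - 1)) * max (g t (x t)) 0)
            - (f t (fun _ => u) + Φ' (V (t - 1)) * max (g t u) 0))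
        + G * Φ' (V T) :=
  regret_decomposition_memoryless_constraints_general d m T hT x f g G hG hgbd V hVm hVrec Φ Φ'
    hΦconv hΦderiv hΦ'nonneg u hu
end
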